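/- arXiv:2403.15963 — 6 statements merged into one kernel-verified Lean document; each statement's English description precedes it below -/
import Mathlib

section
/- Let λ ∈ ℝ and let f₁, f₂ : ℝ → ℝ be bounded C¹ functions with f₁(x) < f₂(x) for all x. If either (i) a(x)f₁′(x) + H(f₁(x),x) < λ < a(x)f₂′(x) + H(f₂(x),x) for all x ∈ ℝ, or (ii) a(x)f₁′(x) + H(f₁(x),x) > λ > a(x)f₂′(x) + H(f₂(x),x) for all x ∈ ℝ, then S^λ(f₁,f₂) is nonempty. -/
/-!
Truncating `p` to `[f₁ x, f₂ x]` turns the equation into `f' = G x f` with `G` continuous and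
bounded on vertical strips. Peano's theorem for such `G` (an ultrafilter limit of Tonelli's
delayed approximations, which are locally equi-Lipschitz) gives a solution started at `-n` from
`f₁ (-n)`; since `f₁` and `f₂` are strict sub- and supersolutions, it stays between them on
`[-n, ∞)`. A second ultrafilter limit, as `n → ∞`, is an entire solution between `f₁` and `f₂`,
where the truncation is inactive. Case (ii) becomes case (i) under `x ↦ -x`.
-/

open MeasureTheory Filter Set

/-- The set `S^lam(f₁,f₂)` of C¹ solutions of `a f' + H(f,x) = lam`
sandwiched between `f₁` and `f₂`. -/
def Ssol (a : ℝ → ℝ) (H : ℝ → ℝ → ℝ) (lam : ℝ) (f₁ f₂ : ℝ → ℝ) : Set (ℝ → ℝ) :=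
  {f | ContDiff ℝ 1 f ∧ (∀ x, a x * deriv f x + H (f x) x = lam) ∧
       ∀ x, f₁ x ≤ f x ∧ f x ≤ f₂ x}

open Function Metric Topology NNReal

section UniformLimits

variable {ι α β γ : Type*} {l : Filter ι}

theorem tendstoUniformlyOn_of_lipschitzOnWith [PseudoMetricSpace α] [PseudoMetricSpace β]
    [l.NeBot] {F : ι → α → β} {f : α → β} {s : Set α} {C : ℝ≥0} (hs : IsCompact s)
    (hF : ∀ᶠ i in l, LipschitzOnWith C (F i) s)
    (hlim : ∀ x ∈ s, Tendsto (F · x) l (𝓝 (f x))) :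
    TendstoUniformlyOn F f l s := by
  have hf : LipschitzOnWith C f s := .of_dist_le_mul fun x hx y hy =>
    le_of_tendsto ((hlim x hx).dist (hlim y hy)) (hF.mono fun i hi => hi.dist_le_mul x hx y hy)
  rw [Metric.tendstoUniformlyOn_iff]
  intro ε hε
  obtain ⟨t, hts, htfin, hcover⟩ :=
    hs.finite_cover_balls (e := ε / (3 * (C + 1))) (by positivity)
  have hnet : ∀ᶠ i in l, ∀ y ∈ t, dist (f y) (F i y) < ε / 3 :=
    (htfin.eventually_all).2 fun y hy => by
      simpa only [dist_comm] using Metric.tendsto_nhds.1 (hlim y (hts hy)) _ (by positivity)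
  filter_upwards [hF, hnet] with i hi hnet x hx
  obtain ⟨y, hyt, hxy⟩ := mem_iUnion₂.1 (hcover hx)
  have hCδ : (C : ℝ) * dist x y ≤ ε / 3 := by
    calc (C : ℝ) * dist x y ≤ (C + 1) * (ε / (3 * (C + 1))) := by
          gcongr
          · linarith
          · exact (mem_ball.1 hxy).le
      _ = ε / 3 := by field_simp
  calc dist (f x) (F i x) ≤ dist (f x) (f y) + dist (f y) (F i y) + dist (F i y) (F i x) :=
        dist_triangle4 _ _ _ _
    _ < ε / 3 + ε / 3 + ε / 3 := by
        have h₁ := hf.dist_le_mul x hx y (hts hyt)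
        have h₂ := hi.dist_le_mul y (hts hyt) x hx
        rw [dist_comm y x] at h₂
        linarith [hnet y hyt]
    _ = ε := by ring

theorem TendstoUniformlyOn.comp_of_uniformContinuousOn [PseudoMetricSpace α]
    [PseudoMetricSpace β] {F : ι → α → β} {f : α → β} {σ : ι → γ → α} {σ₀ : γ → α}
    {s : Set γ} {t : Set α} (hF : TendstoUniformlyOn F f l t) (hf : UniformContinuousOn f t)
    (hσ : TendstoUniformlyOn σ σ₀ l s) (hσt : ∀ᶠ i in l, MapsTo (σ i) s t)
    (hσ₀ : MapsTo σ₀ s t) :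
    TendstoUniformlyOn (fun i x => F i (σ i x)) (fun x => f (σ₀ x)) l s := by
  rw [Metric.tendstoUniformlyOn_iff] at hF hσ ⊢
  intro ε hε
  obtain ⟨δ, hδ, hfδ⟩ := Metric.uniformContinuousOn_iff.1 hf (ε / 2) (half_pos hε)
  filter_upwards [hF (ε / 2) (half_pos hε), hσ δ hδ, hσt] with i hFi hσi hmaps x hx
  calc dist (f (σ₀ x)) (F i (σ i x))
      ≤ dist (f (σ₀ x)) (f (σ i x)) + dist (f (σ i x)) (F i (σ i x)) := dist_triangle _ _ _
    _ < ε / 2 + ε / 2 :=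
        add_lt_add (hfδ _ (hσ₀ hx) _ (hmaps hx) (hσi x hx)) (hFi _ (hmaps hx))
    _ = ε := add_halves ε

theorem TendstoUniformlyOn.uncurry_comp [PseudoMetricSpace α] [PseudoMetricSpace β]
    [ProperSpace β] [PseudoMetricSpace γ] {G : α → β → γ} (hG : Continuous (uncurry G))
    {φ : ι → α → β} {f : α → β} {s : Set α} (hφ : TendstoUniformlyOn φ f l s)
    (hs : IsCompact s) (hf : ContinuousOn f s) :
    TendstoUniformlyOn (fun i x => G x (φ i x)) (fun x => G x (f x)) l s := by
  set K := s ×ˢ cthickening 1 (f '' s)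
  have hGK : UniformContinuousOn (uncurry G) K :=
    (hs.prod (hs.image_of_continuousOn hf).cthickening).uniformContinuousOn_of_continuous
      hG.continuousOn
  rw [Metric.tendstoUniformlyOn_iff] at hφ ⊢
  intro ε hε
  obtain ⟨δ, hδ, hGδ⟩ := Metric.uniformContinuousOn_iff.1 hGK ε hε
  filter_upwards [hφ (min δ 1) (by positivity)] with i hi x hx
  have hclose := hi x hx
  have hfx : f x ∈ f '' s := mem_image_of_mem f hx
  refine hGδ (x, f x) ⟨hx, self_subset_cthickening _ hfx⟩ (x, φ i x)
    ⟨hx, mem_cthickening_of_dist_le _ _ _ _ hfx ?_⟩ ?_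
  · rw [dist_comm]; exact hclose.le.trans (min_le_right _ _)
  · simpa [Prod.dist_eq] using hclose.trans_le (min_le_left _ _)

theorem Ultrafilter.exists_tendstoLocallyUniformly_of_lipschitzOnWith (U : Ultrafilter ι)
    {F : ι → ℝ → ℝ} (hF : ∀ a b, ∃ C, ∀ᶠ i in U, LipschitzOnWith C (F i) (Icc a b))
    {x₀ R : ℝ} (hx₀ : ∀ᶠ i in U, |F i x₀| ≤ R) :
    ∃ f, Continuous f ∧ TendstoLocallyUniformly F f U := by
  have hlim : ∀ x, ∃ y, Tendsto (F · x) U (𝓝 y) := by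
    intro x
    obtain ⟨C, hC⟩ := hF (min x₀ x) (max x₀ x)
    have hbdd : ∀ᶠ i in U, F i x ∈ closedBall 0 (R + C * dist x x₀) := by
      filter_upwards [hC, hx₀] with i hi h₀
      have := hi.dist_le_mul x ⟨min_le_right _ _, le_max_right _ _⟩
        x₀ ⟨min_le_left _ _, le_max_left _ _⟩
      rw [mem_closedBall, dist_zero_right, Real.norm_eq_abs]
      rw [Real.dist_eq] at this
      linarith [abs_sub_abs_le_abs_sub (F i x) (F i x₀)]
    obtain ⟨y, -, hy⟩ := (isCompact_closedBall _ _).ultrafilter_le_nhds' (U.map (F · x)) hbdd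
    exact ⟨y, hy⟩
  choose f hf using hlim
  have hunif : ∀ a b, TendstoUniformlyOn F f U (Icc a b) := fun a b =>
    let ⟨_, hC⟩ := hF a b
    tendstoUniformlyOn_of_lipschitzOnWith isCompact_Icc hC fun x _ => hf x
  refine ⟨f, continuous_iff_continuousAt.2 fun x => ?_,
    tendstoLocallyUniformly_iff_forall_isCompact.2 fun K hK => ?_⟩
  · obtain ⟨_, hC⟩ := hF (x - 1) (x + 1)
    exact ((hunif _ _).continuousOn (hC.frequently.mono fun i hi => hi.continuousOn)).continuousAt
      (Icc_mem_nhds (by linarith) (by linarith))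
  · obtain ⟨a, ha⟩ := hK.bddBelow
    obtain ⟨b, hb⟩ := hK.bddAbove
    exact (hunif a b).mono fun x hx => ⟨ha hx, hb hx⟩

end UniformLimits

theorem Ultrafilter.exists_tendsto_hasDerivAt_comp {ι : Type*} (U : Ultrafilter ι)
    {G : ℝ → ℝ → ℝ} (hG : Continuous (uncurry G))
    (hGb : ∀ a b, ∃ C : ℝ≥0, ∀ t ∈ Icc a b, ∀ p, ‖G t p‖₊ ≤ C)
    {F σ : ι → ℝ → ℝ} {σ₀ : ℝ → ℝ} (hσ₀ : Continuous σ₀) (hσ : TendstoUniformly σ σ₀ U)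
    (hF : ∀ a b, ∀ᶠ i in U, ∀ t ∈ Icc a b, HasDerivAt (F i) (G t (F i (σ i t))) t)
    {x₀ R : ℝ} (hx₀ : ∀ᶠ i in U, |F i x₀| ≤ R) :
    ∃ f, (∀ x, Tendsto (F · x) U (𝓝 (f x))) ∧ ∀ x, HasDerivAt f (G x (f (σ₀ x))) x := by
  have hlip : ∀ a b, ∃ C, ∀ᶠ i in U, LipschitzOnWith C (F i) (Icc a b) := fun a b =>
    let ⟨C, hC⟩ := hGb a b
    ⟨C, (hF a b).mono fun i hi => (convex_Icc a b).lipschitzOnWith_of_nnnorm_hasDerivWithin_le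
      (fun t ht => (hi t ht).hasDerivWithinAt) fun t ht => hC t ht _⟩
  obtain ⟨f, hfc, hFf⟩ := U.exists_tendstoLocallyUniformly_of_lipschitzOnWith hlip hx₀
  have hFf_pt : ∀ x, Tendsto (F · x) U (𝓝 (f x)) := fun x =>
    hFf.tendstoLocallyUniformlyOn.tendsto_at (mem_univ x)
  refine ⟨f, hFf_pt, fun x => ?_⟩
  set s := Icc (x - 1) (x + 1)
  set t := cthickening 1 (σ₀ '' s)
  have ht : IsCompact t := (isCompact_Icc.image hσ₀).cthickening
  have hσt : ∀ᶠ i in U, MapsTo (σ i) s t := by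
    filter_upwards [Metric.tendstoUniformly_iff.1 hσ 1 one_pos] with i hi y hy
    exact mem_cthickening_of_dist_le _ _ _ _ (mem_image_of_mem σ₀ hy)
      ((dist_comm _ _).trans_le (hi y).le)
  have hcomp : TendstoUniformlyOn (fun i y => F i (σ i y)) (fun y => f (σ₀ y)) U s :=
    (tendstoLocallyUniformly_iff_forall_isCompact.1 hFf t ht).comp_of_uniformContinuousOn
      (ht.uniformContinuousOn_of_continuous hfc.continuousOn) hσ.tendstoUniformlyOn hσt
      fun y hy => self_subset_cthickening _ (mem_image_of_mem σ₀ hy)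
  have hderiv := (hcomp.uncurry_comp hG isCompact_Icc (hfc.comp hσ₀).continuousOn).mono
    Ioo_subset_Icc_self
  exact hasDerivAt_of_tendstoUniformlyOn isOpen_Ioo hderiv
    ((hF _ _).mono fun i hi t ht => hi t (Ioo_subset_Icc_self ht)) (fun y _ => hFf_pt y)
    ⟨by linarith, by linarith⟩

/-- Picard iterates of Tonelli's delay equation `u' t = G t (u (max (t - h) A))`, `u A = c₀`;
on `[A, A + k h]` the `k`-th one already solves it, so no limit in `k` is needed. -/
noncomputable def delayedPicard (G : ℝ → ℝ → ℝ) (A c₀ h : ℝ) : ℕ → ℝ → ℝ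
  | 0 => fun _ => c₀
  | k + 1 => fun x => c₀ + ∫ t in A..x, G t (delayedPicard G A c₀ h k (max (t - h) A))

section DelayedPicard

variable {G : ℝ → ℝ → ℝ} {A c₀ h : ℝ}

theorem delayedPicard_self (k : ℕ) : delayedPicard G A c₀ h k A = c₀ := by
  cases k <;> simp [delayedPicard]

theorem continuous_delayedPicard (hG : Continuous (uncurry G)) :
    ∀ k, Continuous (delayedPicard G A c₀ h k)
  | 0 => continuous_const
  | k + 1 => by
    have hint : Continuous fun t => G t (delayedPicard G A c₀ h k (max (t - h) A)) :=
      hG.comp <| continuous_id.prodMk <| (continuous_delayedPicard hG k).comp <| by fun_prop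
    exact continuous_const.add
      (intervalIntegral.continuous_primitive (fun _ _ => hint.intervalIntegrable _ _) A)

theorem delayedPicard_succ_eqOn (hh : 0 ≤ h) :
    ∀ k : ℕ, EqOn (delayedPicard G A c₀ h (k + 1)) (delayedPicard G A c₀ h k) (Icc A (A + k * h))
  | 0, x, hx => by
    obtain rfl : x = A := by simpa using hx
    simp only [delayedPicard_self]
  | k + 1, x, hx => by
    simp only [delayedPicard]
    congr 1
    refine intervalIntegral.integral_congr fun t ht => ?_
    rw [uIcc_of_le hx.1] at ht
    have hk : (0 : ℝ) ≤ k * h := by positivity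
    push_cast at hx
    exact congrArg (G t) <| delayedPicard_succ_eqOn hh k
      ⟨le_max_right _ _, max_le (by nlinarith [ht.2, hx.2]) (by linarith)⟩

theorem hasDerivAt_delayedPicard (hG : Continuous (uncurry G)) (hh : 0 ≤ h) {k : ℕ} {x : ℝ}
    (hx : x ≤ A + k * h) :
    HasDerivAt (delayedPicard G A c₀ h (k + 1))
      (G x (delayedPicard G A c₀ h (k + 1) (max (x - h) A))) x := by
  have hk : (0 : ℝ) ≤ k * h := by positivity
  rw [delayedPicard_succ_eqOn hh k ⟨le_max_right _ _, max_le (by linarith) (by linarith)⟩]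
  have hint : Continuous fun t => G t (delayedPicard G A c₀ h k (max (t - h) A)) :=
    hG.comp <| continuous_id.prodMk <| (continuous_delayedPicard hG k).comp <| by fun_prop
  exact (hint.integral_hasStrictDerivAt A x).hasDerivAt.const_add c₀

end DelayedPicard

theorem exists_eq_forall_ge_hasDerivAt {G : ℝ → ℝ → ℝ} (hG : Continuous (uncurry G))
    (hGb : ∀ a b, ∃ C : ℝ≥0, ∀ t ∈ Icc a b, ∀ p, ‖G t p‖₊ ≤ C) (A c₀ : ℝ) :
    ∃ f : ℝ → ℝ, f A = c₀ ∧ ∀ x ≥ A, HasDerivAt f (G x (f x)) x := by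
  set U := Ultrafilter.of (atTop : Filter ℕ)
  have hU : (U : Filter ℕ) ≤ atTop := Ultrafilter.of_le _
  set h : ℕ → ℝ := fun n => 1 / ((n : ℝ) + 1)
  have hh : ∀ n, 0 ≤ h n := fun n => by positivity
  have hh₀ : Tendsto h atTop (𝓝 0) := tendsto_one_div_add_atTop_nhds_zero_nat
  set F : ℕ → ℝ → ℝ := fun n => delayedPicard G A c₀ (h n) (n * (n + 1) + 1)
  have hσ : TendstoUniformly (fun n t => max (t - h n) A) (fun t => max t A) U := by
    refine Metric.tendstoUniformly_iff.2 fun ε hε => ?_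
    filter_upwards [Metric.tendsto_nhds.1 (hh₀.mono_left hU) ε hε] with n hn t
    rw [Real.dist_eq]
    calc |max t A - max (t - h n) A| ≤ |t - (t - h n)| := abs_max_sub_max_le_abs _ _ _
      _ < ε := by rwa [sub_sub_cancel, ← Real.dist_0_eq_abs]
  have hF : ∀ a b, ∀ᶠ n in U, ∀ t ∈ Icc a b, HasDerivAt (F n) (G t (F n (max (t - h n) A))) t := by
    intro a b
    filter_upwards [(tendsto_natCast_atTop_atTop.eventually_ge_atTop (b - A)).filter_mono hU]
      with n hn t ht
    refine hasDerivAt_delayedPicard hG (hh n) ?_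
    have : ((n * (n + 1) : ℕ) : ℝ) * h n = n := by
      simp only [h]; push_cast; field_simp
    rw [this]; linarith [ht.2]
  obtain ⟨f, hlim, hf⟩ := U.exists_tendsto_hasDerivAt_comp hG hGb (by fun_prop) hσ hF
    (x₀ := A) (R := |c₀|) (.of_forall fun n => by simp [F, delayedPicard_self])
  refine ⟨f, tendsto_nhds_unique (hlim A) ?_, fun x hx => by simpa [max_eq_left hx] using hf x⟩
  simp only [F, delayedPicard_self, tendsto_const_nhds]

theorem le_of_forall_ge_hasDerivAt {u v u' v' : ℝ → ℝ} {A : ℝ}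
    (hu : ∀ x ≥ A, HasDerivAt u (u' x) x) (hv : ∀ x ≥ A, HasDerivAt v (v' x) x)
    (hA : u A ≤ v A) (hlt : ∀ x ≥ A, u x = v x → u' x < v' x) {x : ℝ} (hx : A ≤ x) :
    u x ≤ v x :=
  image_le_of_deriv_right_lt_deriv_boundary'
    (fun y hy => (hu y hy.1).continuousAt.continuousWithinAt)
    (fun y hy => (hu y hy.1).hasDerivWithinAt) hA
    (fun y hy => (hv y hy.1).continuousAt.continuousWithinAt)
    (fun y hy => (hv y hy.1).hasDerivWithinAt) (fun y hy => hlt y hy.1) ⟨hx, le_rfl⟩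

theorem mem_Icc_of_forall_ge_hasDerivAt {G : ℝ → ℝ → ℝ} {u f₁ f₂ : ℝ → ℝ} {A : ℝ}
    (hu : ∀ x ≥ A, HasDerivAt u (G x (u x)) x) (hf₁ : Differentiable ℝ f₁)
    (hf₂ : Differentiable ℝ f₂) (h₁ : ∀ x, deriv f₁ x < G x (f₁ x))
    (h₂ : ∀ x, G x (f₂ x) < deriv f₂ x) (hA : u A ∈ Icc (f₁ A) (f₂ A)) {x : ℝ} (hx : A ≤ x) :
    u x ∈ Icc (f₁ x) (f₂ x) :=
  ⟨le_of_forall_ge_hasDerivAt (fun y _ => (hf₁ y).hasDerivAt) hu hA.1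
      (fun y _ hy => hy ▸ h₁ y) hx,
    le_of_forall_ge_hasDerivAt hu (fun y _ => (hf₂ y).hasDerivAt) hA.2
      (fun y _ hy => hy ▸ h₂ y) hx⟩

theorem exists_nnnorm_le_comp_clamp {Φ : ℝ → ℝ → ℝ} (hΦ : Continuous (uncurry Φ))
    {f₁ f₂ : ℝ → ℝ} (hf₁ : Continuous f₁) (hf₂ : Continuous f₂) (a b : ℝ) :
    ∃ C : ℝ≥0, ∀ t ∈ Icc a b, ∀ p, ‖Φ t (max (f₁ t) (min p (f₂ t)))‖₊ ≤ C := by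
  obtain ⟨R, hR⟩ := isCompact_Icc.exists_bound_of_continuousOn
    ((hf₁.abs.add hf₂.abs).continuousOn (s := Icc a b))
  obtain ⟨C, hC⟩ := (isCompact_Icc.prod (isCompact_Icc (a := -R) (b := R))).bddAbove_image
    (hΦ.nnnorm.continuousOn)
  refine ⟨C, fun t ht p => hC ⟨(t, _), ⟨ht, ?_⟩, rfl⟩⟩
  have hRt : |f₁ t| + |f₂ t| ≤ R := (le_abs_self _).trans (hR t ht)
  exact ⟨by linarith [le_max_left (f₁ t) (min p (f₂ t)), neg_abs_le (f₁ t), abs_nonneg (f₂ t)],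
    max_le (by linarith [le_abs_self (f₁ t), abs_nonneg (f₂ t)])
      ((min_le_right _ _).trans (by linarith [le_abs_self (f₂ t), abs_nonneg (f₁ t)]))⟩

theorem exists_forall_hasDerivAt_mem_Icc {G : ℝ → ℝ → ℝ} (hG : Continuous (uncurry G))
    (hGb : ∀ a b, ∃ C : ℝ≥0, ∀ t ∈ Icc a b, ∀ p, ‖G t p‖₊ ≤ C) {f₁ f₂ : ℝ → ℝ}
    (hf₁ : Differentiable ℝ f₁) (hf₂ : Differentiable ℝ f₂) (hle : ∀ x, f₁ x ≤ f₂ x)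
    (hsub : ∀ x, deriv f₁ x < G x (f₁ x)) (hsuper : ∀ x, G x (f₂ x) < deriv f₂ x) :
    ∃ f, ∀ x, HasDerivAt f (G x (f x)) x ∧ f x ∈ Icc (f₁ x) (f₂ x) := by
  choose u hu₀ hu using fun n : ℕ => exists_eq_forall_ge_hasDerivAt hG hGb (-n) (f₁ (-n))
  have hu_mem : ∀ n : ℕ, ∀ x ≥ -(n : ℝ), u n x ∈ Icc (f₁ x) (f₂ x) := fun n x hx =>
    mem_Icc_of_forall_ge_hasDerivAt (hu n) hf₁ hf₂ hsub hsuper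
      (by rw [hu₀]; exact ⟨le_rfl, hle _⟩) hx
  set U := Ultrafilter.of (atTop : Filter ℕ)
  have hU : ∀ x : ℝ, ∀ᶠ n : ℕ in U, -(n : ℝ) ≤ x := fun x =>
    ((tendsto_natCast_atTop_atTop.eventually_ge_atTop (-x)).mono fun n hn => by
      linarith).filter_mono (Ultrafilter.of_le _)
  have hu0 : ∀ n, |u n 0| ≤ |f₁ 0| + |f₂ 0| := fun n => by
    obtain ⟨hlo, hhi⟩ := hu_mem n 0 (by simp)
    exact abs_le.2 ⟨by linarith [neg_abs_le (f₁ 0), abs_nonneg (f₂ 0)],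
      by linarith [le_abs_self (f₂ 0), abs_nonneg (f₁ 0)]⟩
  obtain ⟨f, hlim, hf⟩ := U.exists_tendsto_hasDerivAt_comp hG hGb continuous_id
    (σ := fun _ => id) (fun _ hV => .of_forall fun _ _ => refl_mem_uniformity hV)
    (fun a _ => (hU a).mono fun n hn t ht => hu n t (hn.trans ht.1)) (.of_forall hu0)
  exact ⟨f, fun x => ⟨hf x,
    isClosed_Icc.mem_of_tendsto (hlim x) ((hU x).mono fun n hn => hu_mem n x hn)⟩⟩

theorem Ssol_nonempty_of_lt_of_lt {a : ℝ → ℝ} {H : ℝ → ℝ → ℝ} (ha_cont : Continuous a)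
    (ha_pos : ∀ x, 0 < a x) (hH_cont : Continuous (uncurry H)) {lam : ℝ} {f₁ f₂ : ℝ → ℝ}
    (hf₁ : Differentiable ℝ f₁) (hf₂ : Differentiable ℝ f₂) (hlt : ∀ x, f₁ x < f₂ x)
    (h₁ : ∀ x, a x * deriv f₁ x + H (f₁ x) x < lam)
    (h₂ : ∀ x, lam < a x * deriv f₂ x + H (f₂ x) x) :
    (Ssol a H lam f₁ f₂).Nonempty := by
  set Φ : ℝ → ℝ → ℝ := fun x p => (lam - H p x) / a x
  have hΦ : Continuous (uncurry Φ) :=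
    (continuous_const.sub (hH_cont.comp continuous_swap)).div (ha_cont.comp continuous_fst)
      fun q => (ha_pos q.1).ne'
  set G : ℝ → ℝ → ℝ := fun x p => Φ x (max (f₁ x) (min p (f₂ x)))
  have hG : Continuous (uncurry G) := hΦ.comp <| continuous_fst.prodMk <|
    (hf₁.continuous.comp continuous_fst).max
      (continuous_snd.min (hf₂.continuous.comp continuous_fst))
  have hGΦ : ∀ x p, p ∈ Icc (f₁ x) (f₂ x) → G x p = Φ x p := fun x p hp => by
    simp only [G, min_eq_left hp.2, max_eq_right hp.1]
  obtain ⟨f, hf⟩ := exists_forall_hasDerivAt_mem_Icc hG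
    (exists_nnnorm_le_comp_clamp hΦ hf₁.continuous hf₂.continuous) hf₁ hf₂ (fun x => (hlt x).le)
    (fun x => by
      rw [hGΦ x _ ⟨le_rfl, (hlt x).le⟩, lt_div_iff₀ (ha_pos x)]; linarith [h₁ x])
    (fun x => by
      rw [hGΦ x _ ⟨(hlt x).le, le_rfl⟩, div_lt_iff₀ (ha_pos x)]; linarith [h₂ x])
  have hderiv : deriv f = fun x => Φ x (f x) :=
    funext fun x => by rw [(hf x).1.deriv, hGΦ x _ (hf x).2]
  refine ⟨f, contDiff_one_iff_deriv.2 ⟨fun x => (hf x).1.differentiableAt, ?_⟩, fun x => ?_,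
    fun x => (hf x).2⟩
  · rw [hderiv]
    exact hΦ.comp (continuous_id.prodMk
      (continuous_iff_continuousAt.2 fun x => (hf x).1.continuousAt))
  · rw [hderiv, mul_div_cancel₀ _ (ha_pos x).ne']
    ring

theorem comp_neg_mem_Ssol {a : ℝ → ℝ} {H : ℝ → ℝ → ℝ} {lam : ℝ} {f₁ f₂ g : ℝ → ℝ}
    (hg : g ∈ Ssol (fun x => a (-x)) (fun p x => -H p (-x)) (-lam) (fun x => f₁ (-x))
      (fun x => f₂ (-x))) :
    (fun x => g (-x)) ∈ Ssol a H lam f₁ f₂ := by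
  obtain ⟨hgc, hgeq, hgmem⟩ := hg
  refine ⟨hgc.comp contDiff_neg, fun x => ?_, fun x => by simpa using hgmem (-x)⟩
  have := hgeq (-x)
  simp only [neg_neg] at this
  rw [deriv_comp_neg]
  linarith

theorem exists_solution_between_lower_and_upper_general
    (a : ℝ → ℝ) (H : ℝ → ℝ → ℝ)
    (ha_cont : Continuous a) (ha_pos : ∀ x, 0 < a x)
    (hH_cont : Continuous fun q : ℝ × ℝ => H q.1 q.2)
    (lam : ℝ) (f₁ f₂ : ℝ → ℝ)
    (hc₁ : ContDiff ℝ 1 f₁) (hc₂ : ContDiff ℝ 1 f₂)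
    (hlt : ∀ x, f₁ x < f₂ x)
    (hcase :
      (∀ x, a x * deriv f₁ x + H (f₁ x) x < lam ∧ lam < a x * deriv f₂ x + H (f₂ x) x) ∨
      (∀ x, lam < a x * deriv f₁ x + H (f₁ x) x ∧ a x * deriv f₂ x + H (f₂ x) x < lam)) :
    (Ssol a H lam f₁ f₂).Nonempty := by
  have hf₁ := hc₁.differentiable one_ne_zero
  have hf₂ := hc₂.differentiable one_ne_zero
  rcases hcase with h | h
  · exact Ssol_nonempty_of_lt_of_lt ha_cont ha_pos hH_cont hf₁ hf₂ hlt
      (fun x => (h x).1) (fun x => (h x).2)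
  · obtain ⟨g, hg⟩ := Ssol_nonempty_of_lt_of_lt (a := fun x => a (-x))
      (H := fun p x => -H p (-x)) (lam := -lam) (f₁ := fun x => f₁ (-x))
      (f₂ := fun x => f₂ (-x)) (ha_cont.comp continuous_neg) (fun x => ha_pos (-x))
      (hH_cont.comp (continuous_fst.prodMk continuous_snd.neg)).neg
      (hf₁.comp differentiable_neg) (hf₂.comp differentiable_neg) (fun x => hlt (-x))
      (fun x => by rw [deriv_comp_neg]; linarith [(h (-x)).1])
      (fun x => by rw [deriv_comp_neg]; linarith [(h (-x)).2])
    exact ⟨_, comp_neg_mem_Ssol hg⟩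

theorem exists_solution_between_lower_and_upper
    (a : ℝ → ℝ) (H : ℝ → ℝ → ℝ)
    (ha_cont : Continuous a) (ha_pos : ∀ x, 0 < a x) (ha_le_one : ∀ x, a x ≤ 1)
    (hH_cont : Continuous fun q : ℝ × ℝ => H q.1 q.2)
    (lam : ℝ) (f₁ f₂ : ℝ → ℝ)
    (hb₁ : ∃ M, ∀ x, |f₁ x| ≤ M) (hb₂ : ∃ M, ∀ x, |f₂ x| ≤ M)
    (hc₁ : ContDiff ℝ 1 f₁) (hc₂ : ContDiff ℝ 1 f₂)
    (hlt : ∀ x, f₁ x < f₂ x)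
    (hcase :
      (∀ x, a x * deriv f₁ x + H (f₁ x) x < lam ∧ lam < a x * deriv f₂ x + H (f₂ x) x) ∨
      (∀ x, lam < a x * deriv f₁ x + H (f₁ x) x ∧ a x * deriv f₂ x + H (f₂ x) x < lam)) :
    (Ssol a H lam f₁ f₂).Nonempty :=
  exists_solution_between_lower_and_upper_general a H ha_cont ha_pos hH_cont lam f₁ f₂ hc₁ hc₂ hlt
    hcase
end

section
/- For every λ ∈ ℝ and bounded f₁, f₂ : ℝ → ℝ with f₁ < f₂ pointwise, the set S^λ(f₁,f₂) is compact in the topology of locally uniform convergence (every sequence in S^λ(f₁,f₂) has a subsequence converging locally uniformly on ℝ to an element of S^λ(f₁,f₂)). Moreover, if S^λ(f₁,f₂) is nonempty, then the function f̄ : ℝ → ℝ defined by f̄(x) = sup{ f(x) : f ∈ S^λ(f₁,f₂) } belongs to S^λ(f₁,f₂). -/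
open MeasureTheory Filter Set

/-!
Solutions are the continuous functions with `f' = G(f, x)`, `G(p, x) = (lam - H(p, x)) / a(x)`,
trapped between `f₁` and `f₂`. As `f₁, f₂` are bounded, `G(f x, x)` is bounded on compacts
uniformly over all solutions, so the solution set is equicontinuous and pointwise bounded. It is
closed in the compact-open topology, since along with `fₙ` the derivatives `G(fₙ x, x)` converge
locally uniformly. By Arzelà–Ascoli it is compact, hence sequentially compact (`C(ℝ, ℝ)` is
metrizable). The maximum of two solutions is again a solution (where they cross they have the
same derivative), so the set is directed upwards; a compact directed set has a greatest element,
and that element is the pointwise supremum.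
-/

open Topology

namespace ContinuousMap

variable {X α : Type*} [TopologicalSpace X]

instance [TopologicalSpace α] [PartialOrder α] [OrderClosedTopology α] :
    OrderClosedTopology C(X, α) where
  isClosed_le' := by
    simp only [ContinuousMap.le_def, ofPred_forall]
    exact isClosed_iInter fun x =>
      isClosed_le (continuous_eval_const x |>.comp continuous_fst)
        (continuous_eval_const x |>.comp continuous_snd)

theorem isCompact_of_isClosed_of_equicontinuous [CompactlyCoherentSpace X] [UniformSpace α]
    [T2Space α] {S : Set C(X, α)} (hS : IsClosed S)
    (hS_eq : Equicontinuous ((↑) : S → X → α))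
    (hS_pt : ∀ x, ∃ Q, IsCompact Q ∧ ∀ f ∈ S, f x ∈ Q) : IsCompact S := by
  have hclosed : IsClosedEmbedding (toUniformOnFunIsCompact : C(X, α) → _) :=
    ⟨isUniformEmbedding_toUniformOnFunIsCompact.isEmbedding, by
      rw [range_toUniformOnFunIsCompact]
      exact UniformOnFun.isClosed_setOfPred_continuous CompactlyCoherentSpace.isCoherentWith⟩
  rw [← hS.closure_eq]
  exact ArzelaAscoli.isCompact_closure_of_isClosedEmbedding (fun _ hK => hK) hclosed
    (fun K _ => hS_eq.equicontinuousOn K) (fun _ _ x _ => hS_pt x)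

end ContinuousMap

theorem IsCompact.exists_isGreatest_of_directedOn {X : Type*} [TopologicalSpace X] [Preorder X]
    [ClosedIciTopology X] [T2Space X] {s : Set X} (hs : IsCompact s) (hne : s.Nonempty)
    (hdir : DirectedOn (· ≤ ·) s) : ∃ x, IsGreatest s x := by
  have : Nonempty s := hne.to_subtype
  obtain ⟨x, hx⟩ := IsCompact.nonempty_iInter_of_directed_nonempty_isCompact_isClosed
    (fun y : s => s ∩ Ici (y : X))
    (fun y z => by
      obtain ⟨w, hw, hyw, hzw⟩ := hdir y y.2 z z.2
      exact ⟨⟨w, hw⟩, fun v hv => ⟨hv.1, hyw.trans hv.2⟩, fun v hv => ⟨hv.1, hzw.trans hv.2⟩⟩)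
    (fun y => ⟨y, y.2, le_rfl⟩) (fun y => hs.inter_right isClosed_Ici)
    (fun y => hs.isClosed.inter isClosed_Ici)
  rw [mem_iInter] at hx
  exact ⟨x, (hx ⟨_, hne.some_mem⟩).1, fun y hy => (hx ⟨y, hy⟩).2⟩

theorem equicontinuous_of_hasDerivAt {ι E : Type*} [NormedAddCommGroup E] [NormedSpace ℝ E]
    {F F' : ι → ℝ → E} (hF : ∀ i x, HasDerivAt (F i) (F' i x) x)
    (hF' : ∀ K, IsCompact K → ∃ C, ∀ i, ∀ x ∈ K, ‖F' i x‖ ≤ C) : Equicontinuous F := by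
  intro x₀
  obtain ⟨C, hC⟩ := hF' _ (isCompact_closedBall x₀ 1)
  refine Metric.equicontinuousAt_of_continuity_modulus (fun x => C * ‖x - x₀‖) ?_ F ?_
  · exact (continuous_const.mul (continuous_id.sub continuous_const).norm).tendsto' x₀ 0 (by simp)
  · filter_upwards [Metric.closedBall_mem_nhds x₀ one_pos] with x hx i
    rw [dist_comm, dist_eq_norm]
    exact (convex_closedBall x₀ 1).norm_image_sub_le_of_norm_hasDerivWithin_le
      (fun y _ => (hF i y).hasDerivWithinAt) (hC i) (Metric.mem_closedBall_self zero_le_one) hx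

theorem HasDerivAt.max_of_eq {f g : ℝ → ℝ} {f' x : ℝ} (hf : HasDerivAt f f' x)
    (hg : HasDerivAt g f' x) (hfg : f x = g x) : HasDerivAt (fun y => max (f y) (g y)) f' x := by
  rw [hasDerivAt_iff_isLittleO] at *
  refine (Asymptotics.isBigO_of_le _ fun y => ?_).trans_isLittleO (hf.norm_left.add hg.norm_left)
  rw [← hfg, max_self, ← max_sub_sub_right, ← max_sub_sub_right]
  simp only [Real.norm_eq_abs]
  exact abs_max_le_max_abs_abs.trans <| (max_le (le_add_of_nonneg_right (abs_nonneg _))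
    (le_add_of_nonneg_left (abs_nonneg _))).trans (le_abs_self _)

def boundedSolutions (G : ℝ → ℝ → ℝ) (f₁ f₂ : ℝ → ℝ) : Set C(ℝ, ℝ) :=
  {f | (∀ x, HasDerivAt f (G (f x) x) x) ∧ ∀ x, f x ∈ Icc (f₁ x) (f₂ x)}

section boundedSolutions

variable {G : ℝ → ℝ → ℝ} {f₁ f₂ : ℝ → ℝ}

theorem isClosed_boundedSolutions (hG : Continuous (Function.uncurry G)) :
    IsClosed (boundedSolutions G f₁ f₂) := by
  -- `g ↦ G (g ·) ·` is continuous for the compact-open topology, being a curried continuous map.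
  let Φ : C(C(ℝ, ℝ), C(ℝ, ℝ)) := ContinuousMap.curry
    ⟨fun p : C(ℝ, ℝ) × ℝ => G (p.1 p.2) p.2, hG.comp (continuous_eval.prodMk continuous_snd)⟩
  refine isClosed_iff_forall_filter.2 fun f l _ hlS hlf => ⟨fun x => ?_, fun x => ?_⟩
  · have hΦ : TendstoLocallyUniformly (fun g => ⇑(Φ g)) (Φ f) l :=
      ContinuousMap.tendsto_iff_tendstoLocallyUniformly.1 ((Φ.continuous.tendsto f).mono_left hlf)
    exact hasDerivAt_of_tendstoLocallyUniformlyOn (f := fun g : C(ℝ, ℝ) => ⇑g)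
      (f' := fun g => ⇑(Φ g)) (g' := Φ f) isOpen_univ
      (tendstoLocallyUniformlyOn_univ.2 hΦ)
      (mem_of_superset (le_principal_iff.1 hlS) fun g hg y _ => hg.1 y)
      (fun y _ => ((continuous_eval_const y).tendsto f).mono_left hlf) (mem_univ x)
  · exact isClosed_Icc.mem_of_tendsto (((continuous_eval_const x).tendsto f).mono_left hlf)
      (mem_of_superset (le_principal_iff.1 hlS) fun g hg => hg.2 x)

theorem equicontinuous_boundedSolutions (hG : Continuous (Function.uncurry G))
    (h₁ : BddBelow (range f₁)) (h₂ : BddAbove (range f₂)) :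
    Equicontinuous ((↑) : boundedSolutions G f₁ f₂ → ℝ → ℝ) := by
  obtain ⟨m, hm⟩ := h₁
  obtain ⟨M, hM⟩ := h₂
  have hrange (f : boundedSolutions G f₁ f₂) (x : ℝ) : f.1 x ∈ Icc m M :=
    ⟨(hm (mem_range_self x)).trans (f.2.2 x).1, (f.2.2 x).2.trans (hM (mem_range_self x))⟩
  refine equicontinuous_of_hasDerivAt (F' := fun f x => G (f.1 x) x) (fun f => f.2.1)
    fun K hK => ?_
  obtain ⟨C, hC⟩ := (isCompact_Icc.prod hK).exists_bound_of_continuousOn hG.continuousOn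
  exact ⟨C, fun f x hx => hC (f.1 x, x) ⟨hrange f x, hx⟩⟩

theorem isCompact_boundedSolutions (hG : Continuous (Function.uncurry G))
    (h₁ : BddBelow (range f₁)) (h₂ : BddAbove (range f₂)) :
    IsCompact (boundedSolutions G f₁ f₂) :=
  ContinuousMap.isCompact_of_isClosed_of_equicontinuous (isClosed_boundedSolutions hG)
    (equicontinuous_boundedSolutions hG h₁ h₂)
    fun x => ⟨Icc (f₁ x) (f₂ x), isCompact_Icc, fun _ hf => hf.2 x⟩

theorem sup_mem_boundedSolutions {f g : C(ℝ, ℝ)} (hf : f ∈ boundedSolutions G f₁ f₂)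
    (hg : g ∈ boundedSolutions G f₁ f₂) : f ⊔ g ∈ boundedSolutions G f₁ f₂ := by
  refine ⟨fun x => ?_, fun x => ⟨le_sup_of_le_left (hf.2 x).1, sup_le (hf.2 x).2 (hg.2 x).2⟩⟩
  change HasDerivAt (fun y => max (f y) (g y)) (G (max (f x) (g x)) x) x
  rcases lt_trichotomy (f x) (g x) with h | h | h
  · rw [max_eq_right h.le]
    refine (hg.1 x).congr_of_eventuallyEq ?_
    filter_upwards [f.continuous.continuousAt.eventually_lt g.continuous.continuousAt h]
      with y hy using max_eq_right hy.le
  · rw [← h, max_self]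
    exact (hf.1 x).max_of_eq (by rw [h]; exact hg.1 x) h
  · rw [max_eq_left h.le]
    refine (hf.1 x).congr_of_eventuallyEq ?_
    filter_upwards [g.continuous.continuousAt.eventually_lt f.continuous.continuousAt h]
      with y hy using max_eq_left hy.le

end boundedSolutions

section Ssol

variable {a : ℝ → ℝ} {H : ℝ → ℝ → ℝ} {lam : ℝ}

noncomputable def odeRhs (a : ℝ → ℝ) (H : ℝ → ℝ → ℝ) (lam p x : ℝ) : ℝ :=
  (lam - H p x) / a x

theorem continuous_odeRhs (ha_cont : Continuous a) (ha_pos : ∀ x, 0 < a x)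
    (hH_cont : Continuous fun q : ℝ × ℝ => H q.1 q.2) :
    Continuous (Function.uncurry (odeRhs a H lam)) :=
  (continuous_const.sub hH_cont).div (ha_cont.comp continuous_snd) fun q => (ha_pos q.2).ne'

theorem Ssol_eq_image_boundedSolutions (ha_cont : Continuous a) (ha_pos : ∀ x, 0 < a x)
    (hH_cont : Continuous fun q : ℝ × ℝ => H q.1 q.2) (f₁ f₂ : ℝ → ℝ) :
    Ssol a H lam f₁ f₂ = (⇑) '' boundedSolutions (odeRhs a H lam) f₁ f₂ := by
  ext f
  constructor
  · rintro ⟨hf, hode, hbd⟩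
    have hdiff := hf.differentiable one_ne_zero
    refine ⟨⟨f, hdiff.continuous⟩, ⟨fun x => ?_, hbd⟩, rfl⟩
    have hfx : odeRhs a H lam (f x) x = deriv f x := by
      rw [odeRhs, div_eq_iff (ha_pos x).ne']
      linarith [hode x]
    rw [ContinuousMap.coe_mk, hfx]
    exact (hdiff x).hasDerivAt
  · rintro ⟨g, ⟨hderiv, hbd⟩, rfl⟩
    have hg' : deriv g = fun x => odeRhs a H lam (g x) x := funext fun x => (hderiv x).deriv
    refine ⟨contDiff_one_iff_deriv.2 ⟨fun x => (hderiv x).differentiableAt, ?_⟩, fun x => ?_, hbd⟩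
    · rw [hg']
      exact (continuous_odeRhs ha_cont ha_pos hH_cont).comp (g.continuous.prodMk continuous_id)
    · rw [(hderiv x).deriv, odeRhs, mul_div_cancel₀ _ (ha_pos x).ne']
      ring

end Ssol

theorem Ssol_compact_and_sup_mem_general
    (a : ℝ → ℝ) (H : ℝ → ℝ → ℝ)
    (ha_cont : Continuous a) (ha_pos : ∀ x, 0 < a x)
    (hH_cont : Continuous fun q : ℝ × ℝ => H q.1 q.2)
    (lam : ℝ) (f₁ f₂ : ℝ → ℝ)
    (hb₁ : ∃ M, ∀ x, |f₁ x| ≤ M) (hb₂ : ∃ M, ∀ x, |f₂ x| ≤ M) :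
    (∀ u : ℕ → ℝ → ℝ, (∀ n, u n ∈ Ssol a H lam f₁ f₂) →
      ∃ φ : ℕ → ℕ, StrictMono φ ∧ ∃ f ∈ Ssol a H lam f₁ f₂,
        TendstoLocallyUniformly (fun n => u (φ n)) f atTop) ∧
    ((Ssol a H lam f₁ f₂).Nonempty →
      (fun x => sSup ((fun f : ℝ → ℝ => f x) '' Ssol a H lam f₁ f₂)) ∈ Ssol a H lam f₁ f₂) := by
  obtain ⟨M₁, hM₁⟩ := hb₁
  obtain ⟨M₂, hM₂⟩ := hb₂
  set S := boundedSolutions (odeRhs a H lam) f₁ f₂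
  have hS : IsCompact S := isCompact_boundedSolutions (continuous_odeRhs ha_cont ha_pos hH_cont)
    ⟨-M₁, by rintro _ ⟨x, rfl⟩; exact (abs_le.1 (hM₁ x)).1⟩
    ⟨M₂, by rintro _ ⟨x, rfl⟩; exact (abs_le.1 (hM₂ x)).2⟩
  rw [Ssol_eq_image_boundedSolutions ha_cont ha_pos hH_cont]
  refine ⟨fun u hu => ?_, fun hne => ?_⟩
  · choose g hgS hgu using hu
    obtain rfl : (fun n => ⇑(g n)) = u := funext hgu
    obtain ⟨F, hFS, φ, hφ, hlim⟩ := hS.isSeqCompact hgS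
    exact ⟨φ, hφ, F, mem_image_of_mem _ hFS,
      ContinuousMap.tendsto_iff_tendstoLocallyUniformly.1 hlim⟩
  · obtain ⟨F, hFS, hF⟩ := hS.exists_isGreatest_of_directedOn hne.of_image
      fun f hf g hg => ⟨f ⊔ g, sup_mem_boundedSolutions hf hg, le_sup_left, le_sup_right⟩
    convert mem_image_of_mem _ hFS using 1
    funext x
    refine IsGreatest.csSup_eq ⟨⟨F, mem_image_of_mem _ hFS, rfl⟩, ?_⟩
    rintro _ ⟨_, ⟨f, hf, rfl⟩, rfl⟩
    exact hF hf x

theorem Ssol_compact_and_sup_mem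
    (a : ℝ → ℝ) (H : ℝ → ℝ → ℝ)
    (ha_cont : Continuous a) (ha_pos : ∀ x, 0 < a x) (ha_le_one : ∀ x, a x ≤ 1)
    (hH_cont : Continuous fun q : ℝ × ℝ => H q.1 q.2)
    (lam : ℝ) (f₁ f₂ : ℝ → ℝ)
    (hb₁ : ∃ M, ∀ x, |f₁ x| ≤ M) (hb₂ : ∃ M, ∀ x, |f₂ x| ≤ M)
    (hlt : ∀ x, f₁ x < f₂ x) :
    (∀ u : ℕ → ℝ → ℝ, (∀ n, u n ∈ Ssol a H lam f₁ f₂) →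
      ∃ φ : ℕ → ℕ, StrictMono φ ∧ ∃ f ∈ Ssol a H lam f₁ f₂,
        TendstoLocallyUniformly (fun n => u (φ n)) f atTop) ∧
    ((Ssol a H lam f₁ f₂).Nonempty →
      (fun x => sSup ((fun f : ℝ → ℝ => f x) '' Ssol a H lam f₁ f₂)) ∈ Ssol a H lam f₁ f₂) :=
  Ssol_compact_and_sup_mem_general a H ha_cont ha_pos hH_cont lam f₁ f₂ hb₁ hb₂
end

section
/- Let λ ∈ ℝ and suppose f : ℝ → ℝ is bounded, C¹, and satisfies a(x)f′(x) + H(f(x),x) ≤ λ for all x ∈ ℝ. Then the set {p ≥ 0 : G_L(p) ≤ λ} is nonempty (equivalently λ ≥ G_L(0)) and |f(x)| ≤ R̄^λ for all x ∈ ℝ. -/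
/-!
If `G_L (f x₀) > λ` at some point, then wherever `|f|` is at least `|f x₀|` the subsolution
inequality and `G_L ≤ H` give `a f' ≤ λ - G_L (f x₀) < 0`, hence `f' ≤ -(G_L (f x₀) - λ)` since
`0 < a ≤ 1`. If `f x₀ ≤ 0`, a barrier argument keeps `f` below a line of negative slope through
`(x₀, f x₀)` for all later times; if `f x₀ ≥ 0`, reflection sends `f` to `+∞` in the past. Either way
`f` is unbounded. So `G_L (f x) ≤ λ` everywhere, i.e. `|f x|` lies in `{p ≥ 0 | G_L p ≤ λ}`, a set
that coercivity bounds from above.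
-/

open Filter Set

theorem Function.Even.comp_abs {φ : ℝ → ℝ} (hφ : φ.Even) (p : ℝ) : φ |p| = φ p := by
  rcases le_total 0 p with hp | hp
  · rw [abs_of_nonneg hp]
  · rw [abs_of_nonpos hp, hφ]

theorem Function.Even.le_of_abs_le {φ : ℝ → ℝ} (hφ : φ.Even) (hmono : MonotoneOn φ (Ici 0))
    {p q : ℝ} (h : |p| ≤ |q|) : φ p ≤ φ q := by
  rw [← hφ.comp_abs p, ← hφ.comp_abs q]
  exact hmono (abs_nonneg p) (abs_nonneg q) h

theorem bddAbove_setOf_le_of_tendsto_atTop {φ : ℝ → ℝ} (hφ : Tendsto φ atTop atTop) (c : ℝ) :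
    BddAbove {p | φ p ≤ c} := by
  obtain ⟨P, hP⟩ := (hφ.eventually_gt_atTop c).exists_forall_of_atTop
  exact ⟨P, fun p hp => not_lt.1 fun hPp => (hP p hPp.le).not_ge hp⟩

section Barrier

variable {g : ℝ → ℝ} {ε : ℝ}

theorem le_sub_mul_of_deriv_lt_neg (hg : Differentiable ℝ g) (hε : 0 ≤ ε) {x₀ : ℝ}
    (h : ∀ x, g x ≤ g x₀ → deriv g x < -ε) {x : ℝ} (hx : x₀ ≤ x) :
    g x ≤ g x₀ - ε * (x - x₀) := by
  have hB : ∀ y, HasDerivAt (fun y => g x₀ - ε * (y - x₀)) (-ε) y := fun y => by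
    simpa using (((hasDerivAt_id y).sub_const x₀).const_mul ε).const_sub (g x₀)
  refine image_le_of_deriv_right_lt_deriv_boundary hg.continuous.continuousOn
    (fun y _ => (hg y).hasDerivAt.hasDerivWithinAt) (by simp) hB (fun y hy hgy => h y ?_) ⟨hx, le_rfl⟩
  rw [hgy, sub_le_self_iff]
  exact mul_nonneg hε (sub_nonneg.2 hy.1)

theorem not_bddBelow_range_of_deriv_le_neg (hg : Differentiable ℝ g) (hε : 0 < ε) (x₀ : ℝ)
    (h : ∀ x, g x ≤ g x₀ → deriv g x ≤ -ε) : ¬BddBelow (range g) := by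
  have hbarrier : ∀ x, x₀ ≤ x → g x ≤ g x₀ - ε / 2 * (x - x₀) := fun x hx =>
    le_sub_mul_of_deriv_lt_neg hg (half_pos hε).le (fun y hy => (h y hy).trans_lt (by linarith)) hx
  refine not_bddBelow_of_tendsto_atBot (l := atTop)
    (tendsto_atBot_mono' _ ((eventually_ge_atTop x₀).mono hbarrier) ?_)
  exact tendsto_atBot_add_const_left _ _ (tendsto_neg_atTop_atBot.comp
    ((tendsto_atTop_add_const_right _ (-x₀) tendsto_id).const_mul_atTop (half_pos hε)))

theorem not_bddAbove_range_of_deriv_le_neg (hg : Differentiable ℝ g) (hε : 0 < ε) (x₀ : ℝ)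
    (h : ∀ x, g x₀ ≤ g x → deriv g x ≤ -ε) : ¬BddAbove (range g) := by
  rintro ⟨M, hM⟩
  refine not_bddBelow_range_of_deriv_le_neg (g := fun y => -g (-y))
    (hg.comp differentiable_neg).neg hε (-x₀) (fun x hx => ?_) ⟨-M, ?_⟩
  · rw [deriv.fun_neg, deriv_comp_neg, neg_neg]
    exact h (-x) (by simpa using hx)
  · rintro _ ⟨y, rfl⟩
    exact neg_le_neg (hM (mem_range_self (-y)))

end Barrier

theorem apply_le_of_mul_deriv_add_apply_le {a φ f : ℝ → ℝ} {c : ℝ} (ha_pos : ∀ x, 0 < a x)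
    (ha_le_one : ∀ x, a x ≤ 1) (hφ : φ.Even) (hmono : MonotoneOn φ (Ici 0))
    (hf : Differentiable ℝ f) (hbelow : BddBelow (range f)) (habove : BddAbove (range f))
    (hsub : ∀ x, a x * deriv f x + φ (f x) ≤ c) (x₀ : ℝ) : φ (f x₀) ≤ c := by
  by_contra! hx₀
  have hε : 0 < φ (f x₀) - c := sub_pos.2 hx₀
  have hderiv : ∀ x, |f x₀| ≤ |f x| → deriv f x ≤ -(φ (f x₀) - c) := fun x hx => by
    have hsub_x := hsub x
    have hφ_x := hφ.le_of_abs_le hmono hx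
    nlinarith [ha_pos x, ha_le_one x]
  rcases le_total (f x₀) 0 with hneg | hpos
  · refine not_bddBelow_range_of_deriv_le_neg hf hε x₀ (fun x hx => hderiv x ?_) hbelow
    rw [abs_of_nonpos hneg, abs_of_nonpos (hx.trans hneg)]
    exact neg_le_neg hx
  · refine not_bddAbove_range_of_deriv_le_neg hf hε x₀ (fun x hx => hderiv x ?_) habove
    rwa [abs_of_nonneg hpos, abs_of_nonneg (hpos.trans hx)]

theorem subsolution_uniform_bound_general
    (a : ℝ → ℝ) (H : ℝ → ℝ → ℝ)
    (ha_pos : ∀ x, 0 < a x) (ha_le_one : ∀ x, a x ≤ 1)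
    (G_L : ℝ → ℝ) (hGL_even : ∀ p, G_L (-p) = G_L p)
    (hGL_mono : MonotoneOn G_L (Ici 0)) (hGL_coercive : Tendsto G_L atTop atTop)
    (hGL_le : ∀ p x, G_L p ≤ H p x)
    (lam : ℝ) (f : ℝ → ℝ)
    (hb : ∃ M, ∀ x, |f x| ≤ M) (hf : ContDiff ℝ 1 f)
    (hineq : ∀ x, a x * deriv f x + H (f x) x ≤ lam) :
    {p : ℝ | 0 ≤ p ∧ G_L p ≤ lam}.Nonempty ∧
    ∀ x, |f x| ≤ sSup {p : ℝ | 0 ≤ p ∧ G_L p ≤ lam} := by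
  obtain ⟨M, hM⟩ := hb
  have hsub : ∀ x, a x * deriv f x + G_L (f x) ≤ lam := fun x =>
    (add_le_add_right (hGL_le (f x) x) _).trans (hineq x)
  have hle : ∀ x, G_L (f x) ≤ lam :=
    apply_le_of_mul_deriv_add_apply_le ha_pos ha_le_one hGL_even hGL_mono
      (hf.differentiable one_ne_zero) ⟨-M, forall_mem_range.2 fun x => (abs_le.1 (hM x)).1⟩
      ⟨M, forall_mem_range.2 fun x => (abs_le.1 (hM x)).2⟩ hsub
  have hmem : ∀ x, |f x| ∈ {p : ℝ | 0 ≤ p ∧ G_L p ≤ lam} := fun x =>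
    ⟨abs_nonneg _, (Function.Even.comp_abs hGL_even _).trans_le (hle x)⟩
  have hbdd : BddAbove {p : ℝ | 0 ≤ p ∧ G_L p ≤ lam} :=
    (bddAbove_setOf_le_of_tendsto_atTop hGL_coercive lam).mono fun _ hp => hp.2
  exact ⟨⟨_, hmem 0⟩, fun x => le_csSup hbdd (hmem x)⟩

theorem subsolution_uniform_bound
    (a : ℝ → ℝ) (H : ℝ → ℝ → ℝ)
    (ha_cont : Continuous a) (ha_pos : ∀ x, 0 < a x) (ha_le_one : ∀ x, a x ≤ 1)
    (hH_cont : Continuous fun q : ℝ × ℝ => H q.1 q.2)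
    (G_L : ℝ → ℝ) (hGL_cont : Continuous G_L) (hGL_even : ∀ p, G_L (-p) = G_L p)
    (hGL_mono : MonotoneOn G_L (Ici 0)) (hGL_coercive : Tendsto G_L atTop atTop)
    (hGL_le : ∀ p x, G_L p ≤ H p x)
    (lam : ℝ) (f : ℝ → ℝ)
    (hb : ∃ M, ∀ x, |f x| ≤ M) (hf : ContDiff ℝ 1 f)
    (hineq : ∀ x, a x * deriv f x + H (f x) x ≤ lam) :
    {p : ℝ | 0 ≤ p ∧ G_L p ≤ lam}.Nonempty ∧
    ∀ x, |f x| ≤ sSup {p : ℝ | 0 ≤ p ∧ G_L p ≤ lam} :=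
  subsolution_uniform_bound_general a H ha_pos ha_le_one G_L hGL_even hGL_mono hGL_coercive hGL_le
    lam f hb hf hineq
end

section
/- For every λ, p₁, p₂ ∈ ℝ with p₁ < p₂, if either G_U(p₁) < λ < G_L(p₂) or G_U(p₂) < λ < G_L(p₁), then there exists f ∈ S_st^λ such that p₁ ≤ f(x,ω) ≤ p₂ for all ω ∈ Ω and x ∈ ℝ. -/
/-!
On `[p₁, p₂]` the equation reads `f' = F(x, f) := (lam - H(f, x, ω)) / a(x, ω)`, and the
assumption on `lam` makes `F` point into `[p₁, p₂]` at both ends (or out of it, a case that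
the time reversal `x ↦ -x` turns into the first one). Solutions started from `p₂` at time `s`
therefore stay in `[p₁, p₂]` and, by the comparison principle, decrease as `s → -∞`; their
limit (the pullback) is a global solution. The construction commutes with the shifts `τ`, so the
pullback is stationary, and it is measurable in `ω` because every solution is a limit of Picard
iterates.
-/

open MeasureTheory Filter Set

structure HJSetting {Ω : Type} [MeasurableSpace Ω] (P : Measure Ω) (τ : ℝ → Ω → Ω)
    (a : ℝ → Ω → ℝ) (H : ℝ → ℝ → Ω → ℝ) (G_L G_U : ℝ → ℝ) : Prop where
  prob : IsProbabilityMeasure P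
  meas_tau : Measurable fun q : ℝ × Ω => τ q.1 q.2
  mp_tau : ∀ x, MeasurePreserving (τ x) P P
  tau_zero : ∀ ω, τ 0 ω = ω
  tau_add : ∀ x y ω, τ (x + y) ω = τ x (τ y ω)
  ergodic : ∀ A : Set Ω, MeasurableSet A → (∀ x, τ x ⁻¹' A = A) → P A = 0 ∨ P A = 1
  meas_a : Measurable fun q : ℝ × Ω => a q.1 q.2
  a_pos : ∀ x ω, 0 < a x ω
  a_le_one : ∀ x ω, a x ω ≤ 1
  a_stat : ∀ x ω, a x ω = a 0 (τ x ω)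
  a_sqrt_lip : ∃ κ > (0:ℝ), ∀ x ω, |Real.sqrt (a x ω) - Real.sqrt (a 0 ω)| ≤ κ * |x|
  meas_H : Measurable fun q : ℝ × ℝ × Ω => H q.1 q.2.1 q.2.2
  H_stat : ∀ p x ω, H p x ω = H p 0 (τ x ω)
  GL_cont : Continuous G_L
  GU_cont : Continuous G_U
  GL_even : ∀ p, G_L (-p) = G_L p
  GU_even : ∀ p, G_U (-p) = G_U p
  GL_mono : MonotoneOn G_L (Ici 0)
  GU_mono : MonotoneOn G_U (Ici 0)
  GL_coercive : Tendsto G_L atTop atTop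
  GU_coercive : Tendsto G_U atTop atTop
  H_lower : ∀ p ω, G_L p ≤ H p 0 ω
  H_upper : ∀ p ω, H p 0 ω ≤ G_U p
  H_lip : ∀ R > (0:ℝ), ∃ K > (0:ℝ), ∀ p q ω, |p| ≤ R → |q| ≤ R →
      |H p 0 ω - H q 0 ω| ≤ K * |p - q|
  H_mod : ∀ R > (0:ℝ), ∃ m : ℝ → ℝ, (∀ r, 0 ≤ m r) ∧ MonotoneOn m (Ici 0) ∧
      Tendsto m (nhdsWithin 0 (Ioi 0)) (nhds 0) ∧
      ∀ p x ω, |p| ≤ R → |H p x ω - H p 0 ω| ≤ m |x|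

/-- `f` is a stationary solution of `a(x,ω) f' + H(f,x,ω) = lam`. -/
def StatSol {Ω : Type} [MeasurableSpace Ω] (P : Measure Ω) (τ : ℝ → Ω → Ω)
    (a : ℝ → Ω → ℝ) (H : ℝ → ℝ → Ω → ℝ) (lam : ℝ) (f : ℝ → Ω → ℝ) : Prop :=
  (Measurable fun q : ℝ × Ω => f q.1 q.2) ∧
  (∀ x ω, f x ω = f 0 (τ x ω)) ∧
  (∀ ω, ContDiff ℝ 1 fun x => f x ω) ∧
  (∀ᵐ ω ∂P, (∃ M, ∀ x, |f x ω| ≤ M) ∧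
    ∀ x, a x ω * deriv (fun y => f y ω) x + H (f x ω) x ω = lam)

open Topology

lemma abs_intervalIntegral_le_pow_div_factorial {g : ℝ → ℝ} {s y c : ℝ} {k : ℕ} (hc : 0 ≤ c)
    (hg : ∀ t ∈ uIoc s y, |g t| ≤ c * |t - s| ^ k / k.factorial) :
    |∫ t in s..y, g t| ≤ c * |y - s| ^ (k + 1) / (k + 1).factorial := by
  have hint : IntervalIntegrable (fun t => c * |t - s| ^ k / k.factorial) volume s y :=
    (by fun_prop : Continuous fun t => c * |t - s| ^ k / k.factorial).intervalIntegrable s y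
  calc |∫ t in s..y, g t| ≤ |∫ t in s..y, c * |t - s| ^ k / k.factorial| :=
        intervalIntegral.norm_integral_le_abs_of_norm_le (ae_restrict_of_forall_mem
          measurableSet_uIoc fun t ht => (Real.norm_eq_abs _).trans_le (hg t ht)) hint
    _ = c * |y - s| ^ (k + 1) / (k + 1).factorial := by
        rw [intervalIntegral.abs_intervalIntegral_eq, integral_div, integral_const_mul,
          integral_pow_abs_sub_uIoc, abs_of_nonneg (by positivity), Nat.factorial_succ]
        push_cast
        field_simp

lemma mem_Icc_of_hasDerivAt {f : ℝ → ℝ → ℝ} {g : ℝ → ℝ} {p₁ p₂ s t : ℝ}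
    (h₁ : ∀ t, 0 < f t p₁) (h₂ : ∀ t, f t p₂ < 0) (hg : ∀ t, HasDerivAt g (f t (g t)) t)
    (hs : g s ∈ Icc p₁ p₂) (hst : s ≤ t) : g t ∈ Icc p₁ p₂ := by
  refine ⟨image_le_of_deriv_right_lt_deriv_boundary (f' := fun _ => 0) continuousOn_const
      (fun x _ => hasDerivWithinAt_const x _ p₁) hs.1 hg (fun x _ hx => ?_) ⟨hst, le_rfl⟩,
    image_le_of_deriv_right_lt_deriv_boundary (HasDerivAt.continuousOn fun x _ => hg x)
      (fun x _ => (hg x).hasDerivWithinAt) hs.2 (fun x => hasDerivAt_const x p₂)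
      (fun x _ hx => ?_) ⟨hst, le_rfl⟩⟩
  · rw [← hx]; exact h₁ x
  · rw [hx]; exact h₂ x

noncomputable def picardIter (f : ℝ → ℝ → ℝ) (s p₀ : ℝ) (k : ℕ) : ℝ → ℝ :=
  (ODE.picard f s p₀)^[k] fun _ => p₀

lemma picardIter_zero (f : ℝ → ℝ → ℝ) (s p₀ x : ℝ) : picardIter f s p₀ 0 x = p₀ := rfl

lemma picardIter_succ (f : ℝ → ℝ → ℝ) (s p₀ : ℝ) (k : ℕ) (x : ℝ) :
    picardIter f s p₀ (k + 1) x = p₀ + ∫ t in s..x, f t (picardIter f s p₀ k t) := by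
  rw [picardIter, Function.iterate_succ_apply']
  rfl

lemma picardIter_add (f : ℝ → ℝ → ℝ) (s y p₀ : ℝ) : ∀ k x,
    picardIter f (s + y) p₀ k (x + y) = picardIter (fun t => f (t + y)) s p₀ k x
  | 0, _ => rfl
  | k + 1, x => by
    rw [picardIter_succ, picardIter_succ, ← intervalIntegral.integral_comp_add_right
      (fun t => f t (picardIter f (s + y) p₀ k t))]
    simp only [picardIter_add f s y p₀ k]

noncomputable def picardSolution (f : ℝ → ℝ → ℝ) (s p₀ x : ℝ) : ℝ :=
  limUnder atTop fun k => picardIter f s p₀ k x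

lemma picardSolution_add (f : ℝ → ℝ → ℝ) (s y p₀ x : ℝ) :
    picardSolution f (s + y) p₀ (x + y) = picardSolution (fun t => f (t + y)) s p₀ x := by
  simp only [picardSolution, picardIter_add]

/-- The solution started from `p₀` in the infinite past. -/
noncomputable def pullback (f : ℝ → ℝ → ℝ) (p₀ t : ℝ) : ℝ :=
  ⨅ n : ℕ, picardSolution f (t - n) p₀ t

structure DominatedField (f : ℝ → ℝ → ℝ) (ρ : ℝ → ℝ) : Prop where
  continuous_left : ∀ p, Continuous (f · p)
  continuous_rate : Continuous ρ
  abs_le_rate : ∀ t p, |f t p| ≤ ρ t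
  abs_sub_le_rate_mul : ∀ t p q, |f t p - f t q| ≤ ρ t * |p - q|

namespace DominatedField

variable {f : ℝ → ℝ → ℝ} {ρ : ℝ → ℝ} {p₁ p₂ : ℝ}

lemma continuous_uncurry (hf : DominatedField f ρ) : Continuous (Function.uncurry f) := by
  refine continuous_iff_continuousAt.2 fun ⟨t₀, p₀⟩ => ?_
  have hle : ∀ q : ℝ × ℝ, dist (Function.uncurry f q) (f t₀ p₀) ≤
      ρ q.1 * |q.2 - p₀| + |f q.1 p₀ - f t₀ p₀| := fun ⟨t, p⟩ =>
    calc |f t p - f t₀ p₀| ≤ |f t p - f t p₀| + |f t p₀ - f t₀ p₀| := abs_sub_le _ _ _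
      _ ≤ ρ t * |p - p₀| + |f t p₀ - f t₀ p₀| := by gcongr; exact hf.abs_sub_le_rate_mul t p p₀
  have hρ := hf.continuous_rate
  have hp₀ := hf.continuous_left p₀
  have hlim : Tendsto (fun q : ℝ × ℝ => ρ q.1 * |q.2 - p₀| + |f q.1 p₀ - f t₀ p₀|)
      (𝓝 (t₀, p₀)) (𝓝 0) := by
    simpa using ((by fun_prop : Continuous fun q : ℝ × ℝ =>
      ρ q.1 * |q.2 - p₀| + |f q.1 p₀ - f t₀ p₀|).tendsto (t₀, p₀))
  exact tendsto_iff_dist_tendsto_zero.2 (squeeze_zero (fun _ => dist_nonneg) hle hlim)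

lemma continuous_comp (hf : DominatedField f ρ) {g : ℝ → ℝ} (hg : Continuous g) :
    Continuous fun t => f t (g t) :=
  hf.continuous_uncurry.comp (continuous_id.prodMk hg)

lemma exists_rate_le (hf : DominatedField f ρ) (a b : ℝ) :
    ∃ M, 0 ≤ M ∧ ∀ t ∈ uIcc a b, ρ t ≤ M := by
  obtain ⟨M, hM⟩ := isCompact_uIcc.exists_bound_of_continuousOn hf.continuous_rate.continuousOn
  have hM' : ∀ t ∈ uIcc a b, ρ t ≤ M := fun t ht => (le_abs_self _).trans (hM t ht)
  exact ⟨M, ((abs_nonneg _).trans (hf.abs_le_rate a 0)).trans (hM' a left_mem_uIcc), hM'⟩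

lemma intervalIntegrable_comp (hf : DominatedField f ρ) {g : ℝ → ℝ} (hg : Measurable g)
    (a b : ℝ) : IntervalIntegrable (fun t => f t (g t)) volume a b :=
  (hf.continuous_rate.intervalIntegrable a b).mono_fun'
    (hf.continuous_uncurry.measurable.comp (measurable_id.prodMk hg)).aestronglyMeasurable
    (ae_of_all _ fun t => hf.abs_le_rate t (g t))

lemma hasDerivAt_of_eq_add_integral (hf : DominatedField f ρ) {g : ℝ → ℝ} (hg : Measurable g)
    {s c : ℝ} (heq : ∀ x, g x = c + ∫ t in s..x, f t (g t)) (x : ℝ) :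
    HasDerivAt g (f x (g x)) x := by
  have hgc : Continuous g := by
    rw [funext heq]
    exact continuous_const.add
      (intervalIntegral.continuous_primitive (hf.intervalIntegrable_comp hg) s)
  exact (((hf.continuous_comp hgc).integral_hasStrictDerivAt s x).hasDerivAt.const_add c
    ).congr_of_eventuallyEq (Eventually.of_forall heq)

lemma eq_add_integral_of_hasDerivAt (hf : DominatedField f ρ) {g : ℝ → ℝ}
    (hg : ∀ t, HasDerivAt g (f t (g t)) t) (x y : ℝ) :
    g x = g y + ∫ t in y..x, f t (g t) := by
  have hgc : Continuous g := continuous_iff_continuousAt.2 fun t => (hg t).continuousAt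
  rw [intervalIntegral.integral_eq_sub_of_hasDerivAt (fun t _ => hg t)
    ((hf.continuous_comp hgc).intervalIntegrable y x)]
  ring

lemma contDiff_one_of_hasDerivAt (hf : DominatedField f ρ) {g : ℝ → ℝ}
    (hg : ∀ t, HasDerivAt g (f t (g t)) t) : ContDiff ℝ 1 g := by
  have hgc : Continuous g := continuous_iff_continuousAt.2 fun t => (hg t).continuousAt
  rw [contDiff_one_iff_deriv, funext fun t => (hg t).deriv]
  exact ⟨fun t => (hg t).differentiableAt, hf.continuous_comp hgc⟩

lemma eq_of_hasDerivAt (hf : DominatedField f ρ) {g h : ℝ → ℝ}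
    (hg : ∀ t, HasDerivAt g (f t (g t)) t) (hh : ∀ t, HasDerivAt h (f t (h t)) t)
    {s t : ℝ} (hst : s ≤ t) (hs : g s = h s) : g t = h t := by
  obtain ⟨M, hM₀, hM⟩ := hf.exists_rate_le s t
  have hlip : ∀ x ∈ Ico s t, LipschitzOnWith M.toNNReal (f x) univ := fun x hx =>
    LipschitzWith.lipschitzOnWith <| LipschitzWith.of_dist_le_mul fun p q => by
      rw [Real.dist_eq, Real.dist_eq, Real.coe_toNNReal M hM₀]
      exact (hf.abs_sub_le_rate_mul x p q).trans <| mul_le_mul_of_nonneg_right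
        (hM x (Icc_subset_uIcc (Ico_subset_Icc_self hx))) (abs_nonneg _)
  exact ODE_solution_unique_of_mem_Icc_right hlip (HasDerivAt.continuousOn fun x _ => hg x)
    (fun x _ => (hg x).hasDerivWithinAt) (fun _ _ => mem_univ _)
    (HasDerivAt.continuousOn fun x _ => hh x) (fun x _ => (hh x).hasDerivWithinAt)
    (fun _ _ => mem_univ _) hs ⟨hst, le_rfl⟩

/-- Two solutions that cross must meet, and then coincide. -/
lemma le_of_hasDerivAt (hf : DominatedField f ρ) {g h : ℝ → ℝ}
    (hg : ∀ t, HasDerivAt g (f t (g t)) t) (hh : ∀ t, HasDerivAt h (f t (h t)) t)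
    {s t : ℝ} (hst : s ≤ t) (hs : g s ≤ h s) : g t ≤ h t := by
  by_contra! hlt
  have hcont : ContinuousOn (fun x => g x - h x) (Icc s t) :=
    HasDerivAt.continuousOn fun x _ => (hg x).sub (hh x)
  obtain ⟨c, hc, hc0⟩ := intermediate_value_Icc hst hcont
    (⟨by linarith, by linarith⟩ : (0 : ℝ) ∈ Icc (g s - h s) (g t - h t))
  have := hf.eq_of_hasDerivAt hg hh hc.2 (sub_eq_zero.1 hc0)
  linarith

lemma continuous_picardIter (hf : DominatedField f ρ) (s p₀ : ℝ) :
    ∀ k, Continuous (picardIter f s p₀ k)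
  | 0 => continuous_const
  | k + 1 => by
    rw [funext (picardIter_succ f s p₀ k)]
    exact continuous_const.add (intervalIntegral.continuous_primitive
      (fun a b => (hf.continuous_comp (hf.continuous_picardIter s p₀ k)).intervalIntegrable a b) s)

lemma abs_picardIter_succ_sub_le (hf : DominatedField f ρ) {s x M : ℝ} (hM₀ : 0 ≤ M)
    (hM : ∀ t ∈ uIcc s x, ρ t ≤ M) (p₀ : ℝ) : ∀ k, ∀ y ∈ uIcc s x,
    |picardIter f s p₀ (k + 1) y - picardIter f s p₀ k y| ≤
      M ^ (k + 1) * |y - s| ^ (k + 1) / (k + 1).factorial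
  | 0, y, hy => by
    have hsub := uIcc_subset_uIcc left_mem_uIcc hy
    rw [picardIter_succ, picardIter_zero, add_sub_cancel_left]
    refine abs_intervalIntegral_le_pow_div_factorial (pow_nonneg hM₀ _) fun t ht => ?_
    simpa [picardIter_zero] using (hf.abs_le_rate t p₀).trans (hM t (hsub (uIoc_subset_uIcc ht)))
  | k + 1, y, hy => by
    have hsub := uIcc_subset_uIcc left_mem_uIcc hy
    have hint : ∀ j, IntervalIntegrable (fun t => f t (picardIter f s p₀ j t)) volume s y :=
      fun j => (hf.continuous_comp (hf.continuous_picardIter s p₀ j)).intervalIntegrable s y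
    rw [picardIter_succ, picardIter_succ, add_sub_add_left_eq_sub,
      ← intervalIntegral.integral_sub (hint _) (hint _)]
    refine abs_intervalIntegral_le_pow_div_factorial (pow_nonneg hM₀ _) fun t ht => ?_
    have ht' := hsub (uIoc_subset_uIcc ht)
    calc |f t (picardIter f s p₀ (k + 1) t) - f t (picardIter f s p₀ k t)|
        ≤ ρ t * |picardIter f s p₀ (k + 1) t - picardIter f s p₀ k t| :=
          hf.abs_sub_le_rate_mul _ _ _
      _ ≤ M * (M ^ (k + 1) * |t - s| ^ (k + 1) / (k + 1).factorial) :=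
          mul_le_mul (hM t ht') (hf.abs_picardIter_succ_sub_le hM₀ hM p₀ k t ht')
            (abs_nonneg _) hM₀
      _ = M ^ (k + 1 + 1) * |t - s| ^ (k + 1) / (k + 1).factorial := by ring

lemma cauchySeq_picardIter (hf : DominatedField f ρ) (s p₀ x : ℝ) :
    CauchySeq fun k => picardIter f s p₀ k x := by
  obtain ⟨M, hM₀, hM⟩ := hf.exists_rate_le s x
  refine cauchySeq_of_dist_le_of_summable
    (fun k => (M * |x - s|) ^ (k + 1) / (k + 1).factorial) (fun k => ?_)
    ((summable_nat_add_iff 1).2 (Real.summable_pow_div_factorial _))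
  rw [dist_comm, Real.dist_eq, mul_pow]
  exact hf.abs_picardIter_succ_sub_le hM₀ hM p₀ k x right_mem_uIcc

lemma tendsto_picardIter (hf : DominatedField f ρ) (s p₀ x : ℝ) :
    Tendsto (fun k => picardIter f s p₀ k x) atTop (𝓝 (picardSolution f s p₀ x)) :=
  (hf.cauchySeq_picardIter s p₀ x).tendsto_limUnder

lemma picardSolution_eq_add_integral (hf : DominatedField f ρ) (s p₀ x : ℝ) :
    picardSolution f s p₀ x = p₀ + ∫ t in s..x, f t (picardSolution f s p₀ t) := by
  refine tendsto_nhds_unique ((hf.tendsto_picardIter s p₀ x).comp (tendsto_add_atTop_nat 1)) ?_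
  simp only [Function.comp_def, picardIter_succ]
  refine tendsto_const_nhds.add <| intervalIntegral.tendsto_integral_filter_of_dominated_convergence
    ρ (Eventually.of_forall fun k =>
      (hf.continuous_comp (hf.continuous_picardIter s p₀ k)).aestronglyMeasurable)
    (Eventually.of_forall fun k => ae_of_all _ fun t _ => hf.abs_le_rate t _)
    (hf.continuous_rate.intervalIntegrable s x) (ae_of_all _ fun t _ => ?_)
  exact ((hf.continuous_uncurry.comp (Continuous.prodMk_right t)).tendsto _).comp
    (hf.tendsto_picardIter s p₀ t)

lemma measurable_picardSolution (hf : DominatedField f ρ) (s p₀ : ℝ) :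
    Measurable (picardSolution f s p₀) :=
  measurable_of_tendsto_metrizable (fun k => (hf.continuous_picardIter s p₀ k).measurable)
    (tendsto_pi_nhds.2 (hf.tendsto_picardIter s p₀))

lemma hasDerivAt_picardSolution (hf : DominatedField f ρ) (s p₀ x : ℝ) :
    HasDerivAt (picardSolution f s p₀) (f x (picardSolution f s p₀ x)) x :=
  hf.hasDerivAt_of_eq_add_integral (hf.measurable_picardSolution s p₀)
    (hf.picardSolution_eq_add_integral s p₀) x

lemma continuous_picardSolution (hf : DominatedField f ρ) (s p₀ : ℝ) :
    Continuous (picardSolution f s p₀) :=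
  continuous_iff_continuousAt.2 fun x => (hf.hasDerivAt_picardSolution s p₀ x).continuousAt

lemma picardSolution_self (hf : DominatedField f ρ) (s p₀ : ℝ) : picardSolution f s p₀ s = p₀ := by
  rw [hf.picardSolution_eq_add_integral, intervalIntegral.integral_same, add_zero]

lemma picardSolution_mem_Icc (hf : DominatedField f ρ) (hp : p₁ ≤ p₂)
    (h₁ : ∀ t, 0 < f t p₁) (h₂ : ∀ t, f t p₂ < 0) {s t : ℝ} (hst : s ≤ t) :
    picardSolution f s p₂ t ∈ Icc p₁ p₂ :=
  mem_Icc_of_hasDerivAt h₁ h₂ (hf.hasDerivAt_picardSolution s p₂)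
    (by rw [hf.picardSolution_self]; exact ⟨hp, le_rfl⟩) hst

lemma picardSolution_mono (hf : DominatedField f ρ) (hp : p₁ ≤ p₂)
    (h₁ : ∀ t, 0 < f t p₁) (h₂ : ∀ t, f t p₂ < 0) {s' s t : ℝ} (hs : s' ≤ s) (hst : s ≤ t) :
    picardSolution f s' p₂ t ≤ picardSolution f s p₂ t :=
  hf.le_of_hasDerivAt (hf.hasDerivAt_picardSolution s' p₂) (hf.hasDerivAt_picardSolution s p₂)
    hst (by rw [hf.picardSolution_self]; exact (hf.picardSolution_mem_Icc hp h₁ h₂ hs).2)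

lemma bddBelow_picardSolution (hf : DominatedField f ρ) (hp : p₁ ≤ p₂)
    (h₁ : ∀ t, 0 < f t p₁) (h₂ : ∀ t, f t p₂ < 0) (t : ℝ) :
    BddBelow (range fun n : ℕ => picardSolution f (t - n) p₂ t) :=
  ⟨p₁, forall_mem_range.2 fun n =>
    (hf.picardSolution_mem_Icc hp h₁ h₂ (sub_le_self t n.cast_nonneg)).1⟩

lemma pullback_mem_Icc (hf : DominatedField f ρ) (hp : p₁ ≤ p₂)
    (h₁ : ∀ t, 0 < f t p₁) (h₂ : ∀ t, f t p₂ < 0) (t : ℝ) : pullback f p₂ t ∈ Icc p₁ p₂ :=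
  ⟨le_ciInf fun n => (hf.picardSolution_mem_Icc hp h₁ h₂ (sub_le_self t n.cast_nonneg)).1,
    ciInf_le_of_le (hf.bddBelow_picardSolution hp h₁ h₂ t) 0
      (by rw [Nat.cast_zero, sub_zero, hf.picardSolution_self])⟩

lemma tendsto_pullback (hf : DominatedField f ρ) (hp : p₁ ≤ p₂)
    (h₁ : ∀ t, 0 < f t p₁) (h₂ : ∀ t, f t p₂ < 0) (t : ℝ) :
    Tendsto (fun s => picardSolution f s p₂ t) atBot (𝓝 (pullback f p₂ t)) := by
  have hmono {s' s : ℝ} (hs : s' ≤ s) (hst : s ≤ t) :=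
    hf.picardSolution_mono hp h₁ h₂ hs hst
  refine tendsto_order.2 ⟨fun b hb => (eventually_le_atBot t).mono fun s hs => ?_,
    fun b hb => ?_⟩
  · obtain ⟨n, hn⟩ := exists_nat_ge (t - s)
    exact hb.trans_le (ciInf_le_of_le (hf.bddBelow_picardSolution hp h₁ h₂ t) n
      (hmono (by linarith) hs))
  · obtain ⟨n, hn⟩ := exists_lt_of_ciInf_lt hb
    exact (eventually_le_atBot (t - n)).mono fun s hs =>
      (hmono hs (sub_le_self t n.cast_nonneg)).trans_lt hn

lemma hasDerivAt_pullback (hf : DominatedField f ρ) (hp : p₁ ≤ p₂)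
    (h₁ : ∀ t, 0 < f t p₁) (h₂ : ∀ t, f t p₂ < 0) (x : ℝ) :
    HasDerivAt (pullback f p₂) (f x (pullback f p₂ x)) x := by
  have hlim := hf.tendsto_pullback hp h₁ h₂
  have hmeas : Measurable (pullback f p₂) :=
    measurable_of_tendsto_metrizable (fun n => hf.measurable_picardSolution (-(n : ℝ)) p₂)
      (tendsto_pi_nhds.2 fun t =>
        (hlim t).comp (tendsto_neg_atTop_atBot.comp tendsto_natCast_atTop_atTop))
  refine hf.hasDerivAt_of_eq_add_integral hmeas (s := 0) (c := pullback f p₂ 0) (fun y => ?_) x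
  -- let `s → -∞` in the integral equation of the solution started at time `s`
  refine tendsto_nhds_unique (hlim y) (((hlim 0).add ?_).congr fun s =>
    (hf.eq_add_integral_of_hasDerivAt (hf.hasDerivAt_picardSolution s p₂) y 0).symm)
  exact intervalIntegral.tendsto_integral_filter_of_dominated_convergence ρ
    (Eventually.of_forall fun s =>
      (hf.continuous_comp (hf.continuous_picardSolution s p₂)).aestronglyMeasurable)
    (Eventually.of_forall fun s => ae_of_all _ fun t _ => hf.abs_le_rate t _)
    (hf.continuous_rate.intervalIntegrable 0 y) (ae_of_all _ fun t _ =>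
      ((hf.continuous_uncurry.comp (Continuous.prodMk_right t)).tendsto _).comp (hlim t))

end DominatedField

lemma measurable_intervalIntegral_of_uncurry {Ω : Type} [MeasurableSpace Ω] {G : ℝ → Ω → ℝ}
    (hG : Measurable fun q : ℝ × Ω => G q.1 q.2) (a b : ℝ) :
    Measurable fun ω => ∫ t in a..b, G t ω := by
  have hIoc : ∀ c d : ℝ, Measurable fun ω => ∫ t in Ioc c d, G t ω := fun c d =>
    (StronglyMeasurable.integral_prod_right' (ν := volume.restrict (Ioc c d))
      (hG.comp measurable_swap).stronglyMeasurable).measurable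
  exact (hIoc a b).sub (hIoc b a)

structure CovariantField {Ω : Type} [MeasurableSpace Ω] (τ : ℝ → Ω → Ω)
    (F : ℝ → ℝ → Ω → ℝ) (ρ : ℝ → Ω → ℝ) : Prop where
  measurable : Measurable fun q : ℝ × ℝ × Ω => F q.1 q.2.1 q.2.2
  dominatedField : ∀ ω, DominatedField (fun t p => F t p ω) (ρ · ω)
  add_left : ∀ t y p ω, F (t + y) p ω = F t p (τ y ω)

structure IsStationaryODESolution {Ω : Type} [MeasurableSpace Ω] (τ : ℝ → Ω → Ω)
    (F : ℝ → ℝ → Ω → ℝ) (u : ℝ → Ω → ℝ) : Prop where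
  measurable : Measurable fun q : ℝ × Ω => u q.1 q.2
  stationary : ∀ x ω, u x ω = u 0 (τ x ω)
  hasDerivAt : ∀ x ω, HasDerivAt (u · ω) (F x (u x ω) ω) x

namespace CovariantField

variable {Ω : Type} [MeasurableSpace Ω] {τ : ℝ → Ω → Ω} {F : ℝ → ℝ → Ω → ℝ} {ρ : ℝ → Ω → ℝ}

lemma measurable_picardIter (hF : CovariantField τ F ρ) (s p₀ : ℝ) :
    ∀ k, Measurable fun q : ℝ × Ω => picardIter (fun t p => F t p q.2) s p₀ k q.1
  | 0 => measurable_const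
  | k + 1 => by
    refine measurable_uncurry_of_continuous_of_measurable
      (u := fun x ω => picardIter (fun t p => F t p ω) s p₀ (k + 1) x)
      (fun ω => (hF.dominatedField ω).continuous_picardIter s p₀ (k + 1)) fun x => ?_
    simp_rw [picardIter_succ]
    exact measurable_const.add (measurable_intervalIntegral_of_uncurry
      (hF.measurable.comp (measurable_fst.prodMk
        ((hF.measurable_picardIter s p₀ k).prodMk measurable_snd))) s x)

lemma measurable_picardSolution (hF : CovariantField τ F ρ) (s p₀ x : ℝ) :
    Measurable fun ω => picardSolution (fun t p => F t p ω) s p₀ x :=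
  measurable_of_tendsto_metrizable
    (fun k => (hF.measurable_picardIter s p₀ k).comp (measurable_const.prodMk measurable_id))
    (tendsto_pi_nhds.2 fun ω => (hF.dominatedField ω).tendsto_picardIter s p₀ x)

lemma pullback_eq_pullback_zero (hF : CovariantField τ F ρ) (p₀ x : ℝ) (ω : Ω) :
    pullback (fun t p => F t p ω) p₀ x = pullback (fun t p => F t p (τ x ω)) p₀ 0 := by
  refine iInf_congr fun n => ?_
  have h := picardSolution_add (fun t p => F t p ω) (-n) x p₀ 0
  simp only [neg_add_eq_sub, zero_add, hF.add_left] at h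
  rw [h, zero_sub]

theorem exists_stationary_solution_of_inward (hF : CovariantField τ F ρ) {p₁ p₂ : ℝ}
    (hp : p₁ ≤ p₂) (h₁ : ∀ t ω, 0 < F t p₁ ω) (h₂ : ∀ t ω, F t p₂ ω < 0) :
    ∃ u, IsStationaryODESolution τ F u ∧ ∀ x ω, u x ω ∈ Icc p₁ p₂ := by
  have hderiv := fun ω => (hF.dominatedField ω).hasDerivAt_pullback hp (h₁ · ω) (h₂ · ω)
  refine ⟨fun x ω => pullback (fun t p => F t p ω) p₂ x,
    ⟨measurable_uncurry_of_continuous_of_measurable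
      (fun ω => continuous_iff_continuousAt.2 fun x => (hderiv ω x).continuousAt)
      (fun x => Measurable.iInf fun n => hF.measurable_picardSolution _ p₂ x),
    hF.pullback_eq_pullback_zero p₂, fun x ω => hderiv ω x⟩,
    fun x ω => (hF.dominatedField ω).pullback_mem_Icc hp (h₁ · ω) (h₂ · ω) x⟩

lemma comp_neg (hF : CovariantField τ F ρ) :
    CovariantField (fun y => τ (-y)) (fun t p ω => -F (-t) p ω) (fun t ω => ρ (-t) ω) where
  measurable := (hF.measurable.comp (measurable_fst.neg.prodMk measurable_snd)).neg
  dominatedField ω :=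
    let hf := hF.dominatedField ω
    ⟨fun p => ((hf.continuous_left p).comp continuous_neg).neg,
      hf.continuous_rate.comp continuous_neg,
      fun t p => by rw [abs_neg]; exact hf.abs_le_rate _ _,
      fun t p q => by rw [neg_sub_neg, abs_sub_comm]; exact hf.abs_sub_le_rate_mul _ _ _⟩
  add_left t y p ω := by simp only [neg_add, hF.add_left]

/-- Time reversal turns a field pointing out of `[p₁, p₂]` into one pointing inward. -/
theorem exists_stationary_solution_of_outward (hF : CovariantField τ F ρ) {p₁ p₂ : ℝ}
    (hp : p₁ ≤ p₂) (h₁ : ∀ t ω, F t p₁ ω < 0) (h₂ : ∀ t ω, 0 < F t p₂ ω) :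
    ∃ u, IsStationaryODESolution τ F u ∧ ∀ x ω, u x ω ∈ Icc p₁ p₂ := by
  obtain ⟨v, hv, hmem⟩ := hF.comp_neg.exists_stationary_solution_of_inward hp
    (fun t ω => neg_pos.2 (h₁ _ ω)) (fun t ω => neg_neg_iff_pos.2 (h₂ _ ω))
  refine ⟨fun x ω => v (-x) ω, ⟨hv.measurable.comp (measurable_fst.neg.prodMk measurable_snd),
    fun x ω => by simpa using hv.stationary (-x) ω, fun x ω => ?_⟩, fun x ω => hmem (-x) ω⟩
  simpa [Function.comp_def] using (hv.hasDerivAt (-x) ω).comp x (hasDerivAt_neg x)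

end CovariantField

/-- The Hamilton–Jacobi equation `a f' + H(f) = lam` solved for `f'`, with `H` frozen outside
`[p₁, p₂]` so that the field is globally Lipschitz. -/
noncomputable def hjField {Ω : Type} (a : ℝ → Ω → ℝ) (H : ℝ → ℝ → Ω → ℝ) (lam p₁ p₂ : ℝ)
    (hp : p₁ ≤ p₂) (t p : ℝ) (ω : Ω) : ℝ :=
  (lam - H (projIcc p₁ p₂ hp p) t ω) / a t ω

namespace HJSetting

variable {Ω : Type} [MeasurableSpace Ω] {P : Measure Ω} {τ : ℝ → Ω → Ω} {a : ℝ → Ω → ℝ}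
  {H : ℝ → ℝ → Ω → ℝ} {G_L G_U : ℝ → ℝ} {lam p₁ p₂ : ℝ}

lemma a_add (hset : HJSetting P τ a H G_L G_U) (x y : ℝ) (ω : Ω) :
    a (x + y) ω = a x (τ y ω) := by
  rw [hset.a_stat, hset.tau_add, ← hset.a_stat]

lemma H_add (hset : HJSetting P τ a H G_L G_U) (p x y : ℝ) (ω : Ω) :
    H p (x + y) ω = H p x (τ y ω) := by
  rw [hset.H_stat, hset.tau_add, ← hset.H_stat]

lemma GL_le_H (hset : HJSetting P τ a H G_L G_U) (p x : ℝ) (ω : Ω) : G_L p ≤ H p x ω :=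
  hset.H_stat p x ω ▸ hset.H_lower p _

lemma H_le_GU (hset : HJSetting P τ a H G_L G_U) (p x : ℝ) (ω : Ω) : H p x ω ≤ G_U p :=
  hset.H_stat p x ω ▸ hset.H_upper p _

lemma continuous_a (hset : HJSetting P τ a H G_L G_U) (ω : Ω) : Continuous (a · ω) := by
  obtain ⟨κ, -, hκ⟩ := hset.a_sqrt_lip
  have hsqrt : LipschitzWith κ.toNNReal fun x => √(a x ω) :=
    LipschitzWith.of_dist_le_mul fun x y => by
      have h := hκ (x - y) (τ y ω)
      rw [← hset.a_add, sub_add_cancel, ← hset.a_stat] at h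
      rw [Real.dist_eq, Real.dist_eq]
      exact h.trans (mul_le_mul_of_nonneg_right (Real.le_coe_toNNReal κ) (abs_nonneg _))
  exact (hsqrt.continuous.pow 2).congr fun x => Real.sq_sqrt (hset.a_pos x ω).le

lemma continuous_H (hset : HJSetting P τ a H G_L G_U) (p : ℝ) (ω : Ω) :
    Continuous (H p · ω) := by
  obtain ⟨m, -, -, hm, hmod⟩ := hset.H_mod (|p| + 1) (by positivity)
  -- `m 0` need not vanish, so the modulus is only used at `x ≠ y`
  refine continuous_iff_continuousAt.2 fun y => continuousAt_iff_punctured_nhds.2 ?_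
  have hle : ∀ x, dist (H p x ω) (H p y ω) ≤ m |x - y| := fun x => by
    have h := hmod p (x - y) (τ y ω) (by linarith)
    rwa [← hset.H_add, sub_add_cancel, ← hset.H_stat] at h
  have hzero : Tendsto (fun x => |x - y|) (𝓝 y) (𝓝 0) := by
    simpa using ((continuous_sub_right y).abs.tendsto y)
  have hdist : Tendsto (fun x => |x - y|) (𝓝[≠] y) (𝓝[>] 0) :=
    tendsto_nhdsWithin_iff.2 ⟨hzero.mono_left nhdsWithin_le_nhds,
      eventually_nhdsWithin_of_forall fun x hx => abs_pos.2 (sub_ne_zero.2 hx)⟩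
  exact tendsto_iff_dist_tendsto_zero.2
    (squeeze_zero (fun _ => dist_nonneg) hle (hm.comp hdist))

lemma exists_abs_H_le (hset : HJSetting P τ a H G_L G_U) (hp : p₁ ≤ p₂) :
    ∃ C, 0 ≤ C ∧ ∀ p ∈ Icc p₁ p₂, ∀ x ω, |H p x ω| ≤ C := by
  obtain ⟨C₁, hC₁⟩ := isCompact_Icc.exists_bound_of_continuousOn hset.GL_cont.continuousOn
  obtain ⟨C₂, hC₂⟩ := isCompact_Icc.exists_bound_of_continuousOn hset.GU_cont.continuousOn
  refine ⟨max C₁ C₂, (norm_nonneg _).trans ((hC₁ p₁ ⟨le_rfl, hp⟩).trans (le_max_left _ _)),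
    fun p hp' x ω => abs_le.2 ⟨?_, ?_⟩⟩
  · linarith [neg_le_of_abs_le (hC₁ p hp'), le_max_left C₁ C₂, hset.GL_le_H p x ω]
  · linarith [le_of_abs_le (hC₂ p hp'), le_max_right C₁ C₂, hset.H_le_GU p x ω]

lemma exists_lipschitz_H (hset : HJSetting P τ a H G_L G_U) (p₁ p₂ : ℝ) :
    ∃ K, 0 ≤ K ∧ ∀ p ∈ Icc p₁ p₂, ∀ q ∈ Icc p₁ p₂, ∀ x ω,
      |H p x ω - H q x ω| ≤ K * |p - q| := by
  obtain ⟨K, hK, hlip⟩ := hset.H_lip (max |p₁| |p₂| + 1) (by positivity)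
  have hR : ∀ p ∈ Icc p₁ p₂, |p| ≤ max |p₁| |p₂| + 1 := fun p hp =>
    (abs_le_max_abs_abs hp.1 hp.2).trans (le_add_of_nonneg_right zero_le_one)
  refine ⟨K, hK.le, fun p hp q hq x ω => ?_⟩
  rw [hset.H_stat p, hset.H_stat q]
  exact hlip p q _ (hR p hp) (hR q hq)

lemma exists_covariantField_hjField (hset : HJSetting P τ a H G_L G_U) (lam : ℝ)
    (hp : p₁ ≤ p₂) : ∃ ρ, CovariantField τ (hjField a H lam p₁ p₂ hp) ρ := by
  obtain ⟨C, hC₀, hC⟩ := hset.exists_abs_H_le hp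
  obtain ⟨K, hK₀, hK⟩ := hset.exists_lipschitz_H p₁ p₂
  have hproj : Continuous fun p => (projIcc p₁ p₂ hp p : ℝ) :=
    continuous_subtype_val.comp continuous_projIcc
  refine ⟨fun t ω => (|lam| + C + K) / a t ω, ⟨?_, fun ω => ⟨fun p => ?_, ?_, fun t p => ?_,
    fun t p q => ?_⟩, fun t y p ω => ?_⟩⟩
  · exact (measurable_const.sub (hset.meas_H.comp (hproj.measurable.comp
      (measurable_fst.comp measurable_snd) |>.prodMk (measurable_fst.prodMk
        (measurable_snd.comp measurable_snd))))).div
      (hset.meas_a.comp (measurable_fst.prodMk (measurable_snd.comp measurable_snd)))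
  · exact (continuous_const.sub (hset.continuous_H _ ω)).div (hset.continuous_a ω)
      fun t => (hset.a_pos t ω).ne'
  · exact continuous_const.div (hset.continuous_a ω) fun t => (hset.a_pos t ω).ne'
  · rw [hjField, abs_div, abs_of_pos (hset.a_pos t ω)]
    refine div_le_div_of_nonneg_right ?_ (hset.a_pos t ω).le
    linarith [abs_sub lam (H (projIcc p₁ p₂ hp p) t ω), hC _ (projIcc p₁ p₂ hp p).2 t ω]
  · rw [hjField, hjField, div_sub_div_same, sub_sub_sub_cancel_left, abs_div,
      abs_of_pos (hset.a_pos t ω), div_mul_eq_mul_div]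
    refine div_le_div_of_nonneg_right ?_ (hset.a_pos t ω).le
    calc |H (projIcc p₁ p₂ hp q) t ω - H (projIcc p₁ p₂ hp p) t ω|
        ≤ K * |(projIcc p₁ p₂ hp q : ℝ) - projIcc p₁ p₂ hp p| :=
          hK _ (projIcc p₁ p₂ hp q).2 _ (projIcc p₁ p₂ hp p).2 t ω
      _ ≤ (|lam| + C + K) * |p - q| := by
        rw [abs_sub_comm p q]
        exact mul_le_mul (by linarith [abs_nonneg lam]) (abs_projIcc_sub_projIcc hp)
          (abs_nonneg _) (by positivity)
  · simp only [hjField, hset.H_add, hset.a_add]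

lemma hjField_pos (hset : HJSetting P τ a H G_L G_U) (hp : p₁ ≤ p₂) {q : ℝ}
    (hq : q ∈ Icc p₁ p₂) (h : G_U q < lam) (t : ℝ) (ω : Ω) :
    0 < hjField a H lam p₁ p₂ hp t q ω := by
  rw [hjField, projIcc_of_mem hp hq]
  exact div_pos (by linarith [hset.H_le_GU q t ω]) (hset.a_pos t ω)

lemma hjField_neg (hset : HJSetting P τ a H G_L G_U) (hp : p₁ ≤ p₂) {q : ℝ}
    (hq : q ∈ Icc p₁ p₂) (h : lam < G_L q) (t : ℝ) (ω : Ω) :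
    hjField a H lam p₁ p₂ hp t q ω < 0 := by
  rw [hjField, projIcc_of_mem hp hq]
  exact div_neg_of_neg_of_pos (by linarith [hset.GL_le_H q t ω]) (hset.a_pos t ω)

lemma statSol_of_isStationaryODESolution (hset : HJSetting P τ a H G_L G_U)
    {hp : p₁ ≤ p₂} {ρ : ℝ → Ω → ℝ} (hF : CovariantField τ (hjField a H lam p₁ p₂ hp) ρ)
    {u : ℝ → Ω → ℝ} (hu : IsStationaryODESolution τ (hjField a H lam p₁ p₂ hp) u)
    (hmem : ∀ x ω, u x ω ∈ Icc p₁ p₂) : StatSol P τ a H lam u := by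
  refine ⟨hu.measurable, hu.stationary,
    fun ω => (hF.dominatedField ω).contDiff_one_of_hasDerivAt (hu.hasDerivAt · ω),
    ae_of_all _ fun ω => ⟨⟨max |p₁| |p₂|, fun x => abs_le_max_abs_abs (hmem x ω).1 (hmem x ω).2⟩,
      fun x => ?_⟩⟩
  rw [(hu.hasDerivAt x ω).deriv, hjField, projIcc_of_mem hp (hmem x ω),
    mul_div_cancel₀ _ (hset.a_pos x ω).ne']
  ring

end HJSetting

theorem exists_stationary_solution_between_constants
    {Ω : Type} [MeasurableSpace Ω] (P : Measure Ω) (τ : ℝ → Ω → Ω)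
    (a : ℝ → Ω → ℝ) (H : ℝ → ℝ → Ω → ℝ) (G_L G_U : ℝ → ℝ)
    (hset : HJSetting P τ a H G_L G_U)
    (lam p₁ p₂ : ℝ) (hp : p₁ < p₂)
    (hcase : (G_U p₁ < lam ∧ lam < G_L p₂) ∨ (G_U p₂ < lam ∧ lam < G_L p₁)) :
    ∃ f : ℝ → Ω → ℝ, StatSol P τ a H lam f ∧
      ∀ ω x, p₁ ≤ f x ω ∧ f x ω ≤ p₂ := by
  have hp₁ : p₁ ∈ Icc p₁ p₂ := left_mem_Icc.2 hp.le
  have hp₂ : p₂ ∈ Icc p₁ p₂ := right_mem_Icc.2 hp.le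
  obtain ⟨ρ, hF⟩ := hset.exists_covariantField_hjField lam hp.le
  obtain ⟨u, hu, hmem⟩ : ∃ u, IsStationaryODESolution τ (hjField a H lam p₁ p₂ hp.le) u ∧
      ∀ x ω, u x ω ∈ Icc p₁ p₂ := by
    rcases hcase with ⟨h₁, h₂⟩ | ⟨h₂, h₁⟩
    · exact hF.exists_stationary_solution_of_inward hp.le (hset.hjField_pos hp.le hp₁ h₁)
        (hset.hjField_neg hp.le hp₂ h₂)
    · exact hF.exists_stationary_solution_of_outward hp.le (hset.hjField_neg hp.le hp₁ h₁)
        (hset.hjField_pos hp.le hp₂ h₂)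
  exact ⟨u, hset.statSol_of_isStationaryODESolution hF hu hmem, fun ω x => hmem x ω⟩
end

section
/- The set E is nonempty, inf E = −∞ and sup E = +∞; that is, E is unbounded both from above and from below. -/
/-!
Fix `c`, pick `λ > G_U(c)` and, by coercivity, `R ≥ |c|` with `G_L(R) > λ`. For the equation
`f' = (λ - H(f, x, ω)) / a(x, ω)`, with the state clamped to `[c, R]`, the slope is positive at `c`
and negative at `R`, so `[c, R]` is forward invariant. Start from the value `c` at time `s` (Picard
iteration keeps the solution measurable in `ω`) and let `s → -∞`: by the comparison principle the
solutions increase, and their limit is a solution on all of `ℝ`. It depends on `ω` only through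
the environment seen from `x`, hence is stationary, and its mean is at least `c`. The reflection
`x ↦ -x`, `p ↦ -p` preserves the hypotheses and negates `E`.
-/

open MeasureTheory Filter Set

/-- The set `E` of expectations `𝔼[f(0,·)]` over all stationary solutions `f`. -/
def Eset {Ω : Type} [MeasurableSpace Ω] (P : Measure Ω) (τ : ℝ → Ω → Ω)
    (a : ℝ → Ω → ℝ) (H : ℝ → ℝ → Ω → ℝ) : Set ℝ :=
  {θ | ∃ lam f, StatSol P τ a H lam f ∧ (∫ ω, f 0 ω ∂P) = θ}

open scoped Topology NNReal Interval

structure IsBoundedLipschitzField (f : ℝ → ℝ → ℝ) : Prop where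
  continuous : Continuous (Function.uncurry f)
  bounded : ∀ K, IsCompact K → ∃ M, ∀ t ∈ K, ∀ p, |f t p| ≤ M
  lipschitz : ∀ K, IsCompact K → ∃ L, ∀ t ∈ K, LipschitzWith L (f t)

noncomputable def picard (f : ℝ → ℝ → ℝ) (c : ℝ) : ℕ → ℝ → ℝ
  | 0 => fun _ => c
  | k + 1 => fun x => c + ∫ t in (0:ℝ)..x, f t (picard f c k t)

-- For an `IsBoundedLipschitzField` the Picard iterates converge to the solution of `u' = f t u`,
-- `u 0 = c`; otherwise this is a junk value.
noncomputable def odeSol (f : ℝ → ℝ → ℝ) (c x : ℝ) : ℝ :=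
  limUnder atTop fun k => picard f c k x

-- The solution of `u' = f t u` with `u s = c`.
noncomputable def odeSolFrom (f : ℝ → ℝ → ℝ) (c s x : ℝ) : ℝ :=
  odeSol (fun t => f (t + s)) c (x - s)

theorem picard_succ (f : ℝ → ℝ → ℝ) (c : ℝ) (k : ℕ) (x : ℝ) :
    picard f c (k + 1) x = c + ∫ t in (0:ℝ)..x, f t (picard f c k t) := rfl

theorem continuous_picard {f : ℝ → ℝ → ℝ} (hf : Continuous (Function.uncurry f)) (c : ℝ) :
    ∀ k, Continuous (picard f c k)
  | 0 => continuous_const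
  | k + 1 => continuous_const.add <| intervalIntegral.continuous_primitive
      (fun a b => (hf.comp₂ continuous_id (continuous_picard hf c k)).intervalIntegrable a b) 0

theorem abs_picard_succ_sub_le {f : ℝ → ℝ → ℝ} (hf : Continuous (Function.uncurry f)) (c : ℝ)
    {y₀ M : ℝ} {L : ℝ≥0} (hM : ∀ t ∈ [[0, y₀]], ∀ p, |f t p| ≤ M)
    (hL : ∀ t ∈ [[0, y₀]], LipschitzWith L (f t)) (k : ℕ) :
    ∀ y ∈ [[0, y₀]], |picard f c (k + 1) y - picard f c k y| ≤
      M * L ^ k * |y| ^ (k + 1) / (k + 1).factorial := by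
  have hsub : ∀ y ∈ [[0, y₀]], Ι 0 y ⊆ [[0, y₀]] :=
    fun y hy => uIoc_subset_uIcc.trans (uIcc_subset_uIcc left_mem_uIcc hy)
  induction k with
  | zero =>
    intro y hy
    have := intervalIntegral.norm_integral_le_of_norm_le_const (f := fun t => f t c)
      fun t ht => (Real.norm_eq_abs _).trans_le (hM t (hsub y hy ht) c)
    simpa [picard_succ, picard] using this
  | succ k ih =>
    intro y hy
    have hcont : ∀ j, Continuous fun t => f t (picard f c j t) :=
      fun j => hf.comp₂ continuous_id (continuous_picard hf c j)
    calc |picard f c (k + 2) y - picard f c (k + 1) y|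
        = ‖∫ t in (0:ℝ)..y, (f t (picard f c (k + 1) t) - f t (picard f c k t))‖ := by
          rw [picard_succ, picard_succ, add_sub_add_left_eq_sub, Real.norm_eq_abs,
            intervalIntegral.integral_sub ((hcont _).intervalIntegrable _ _)
              ((hcont _).intervalIntegrable _ _)]
      _ ≤ ∫ t in Ι 0 y, ‖f t (picard f c (k + 1) t) - f t (picard f c k t)‖ :=
          intervalIntegral.norm_integral_le_integral_norm_uIoc
      _ ≤ ∫ t in Ι 0 y, L * (M * L ^ k / (k + 1).factorial) * |t - 0| ^ (k + 1) := by
          refine setIntegral_mono_on ((hcont _).sub (hcont _)).norm.integrableOn_uIoc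
            (by fun_prop : Continuous _).integrableOn_uIoc measurableSet_uIoc fun t ht => ?_
          have ht' : t ∈ [[0, y₀]] := hsub y hy ht
          calc ‖f t (picard f c (k + 1) t) - f t (picard f c k t)‖
              ≤ L * |picard f c (k + 1) t - picard f c k t| := by
                simpa [Real.dist_eq] using (hL t ht').dist_le_mul _ _
            _ ≤ L * (M * L ^ k * |t| ^ (k + 1) / (k + 1).factorial) :=
                mul_le_mul_of_nonneg_left (ih t ht') L.2
            _ = _ := by rw [sub_zero]; ring
      _ = M * L ^ (k + 1) * |y| ^ (k + 2) / (k + 2).factorial := by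
          rw [integral_const_mul, integral_pow_abs_sub_uIoc, sub_zero,
            Nat.factorial_succ (k + 1)]
          push_cast
          field_simp
          ring

theorem mem_Icc_of_hasDerivAt_of_boundary {f : ℝ → ℝ → ℝ} {u : ℝ → ℝ} {c R s x : ℝ}
    (hu : ∀ t, HasDerivAt u (f t (u t)) t) (hc : ∀ t, 0 < f t c) (hR : ∀ t, f t R < 0)
    (hs : u s ∈ Icc c R) (hx : s ≤ x) : u x ∈ Icc c R := by
  have hcont : ContinuousOn u (Icc s x) := fun t _ => (hu t).continuousAt.continuousWithinAt
  constructor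
  · refine image_le_of_deriv_right_lt_deriv_boundary' continuousOn_const
      (fun t _ => hasDerivWithinAt_const t _ c) hs.1 hcont (fun t _ => (hu t).hasDerivWithinAt)
      (fun t _ h => ?_) ⟨hx, le_rfl⟩
    rw [← h]
    exact hc t
  · refine image_le_of_deriv_right_lt_deriv_boundary' hcont (fun t _ => (hu t).hasDerivWithinAt)
      hs.2 continuousOn_const (fun t _ => hasDerivWithinAt_const t _ R) (fun t _ h => ?_)
      ⟨hx, le_rfl⟩
    rw [h]
    exact hR t

namespace IsBoundedLipschitzField

variable {f : ℝ → ℝ → ℝ} (hf : IsBoundedLipschitzField f)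
include hf

theorem comp_add_right (s : ℝ) : IsBoundedLipschitzField fun t => f (t + s) where
  continuous := hf.continuous.comp₂ (continuous_fst.add continuous_const) continuous_snd
  bounded K hK := by
    obtain ⟨M, hM⟩ := hf.bounded _ (hK.image (continuous_add_const s))
    exact ⟨M, fun t ht => hM _ (mem_image_of_mem _ ht)⟩
  lipschitz K hK := by
    obtain ⟨L, hL⟩ := hf.lipschitz _ (hK.image (continuous_add_const s))
    exact ⟨L, fun t ht => hL _ (mem_image_of_mem _ ht)⟩

theorem intervalIntegrable_comp {u : ℝ → ℝ} (hu : Measurable u) (a b : ℝ) :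
    IntervalIntegrable (fun t => f t (u t)) volume a b := by
  obtain ⟨M, hM⟩ := hf.bounded _ isCompact_uIcc
  refine (intervalIntegrable_const (c := M)).mono_fun'
    (hf.continuous.measurable.comp (measurable_id.prodMk hu)).aestronglyMeasurable ?_
  filter_upwards [ae_restrict_mem measurableSet_uIoc] with t ht
  exact hM t (uIoc_subset_uIcc ht) _

theorem tendsto_integral_comp {u : ℕ → ℝ → ℝ} {v : ℝ → ℝ} (hu : ∀ n, Measurable (u n))
    (hlim : ∀ t, Tendsto (fun n => u n t) atTop (𝓝 (v t))) (a b : ℝ) :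
    Tendsto (fun n => ∫ t in a..b, f t (u n t)) atTop (𝓝 (∫ t in a..b, f t (v t))) := by
  obtain ⟨M, hM⟩ := hf.bounded _ isCompact_uIcc
  refine intervalIntegral.tendsto_integral_filter_of_dominated_convergence (fun _ => M)
    (Eventually.of_forall fun n => (hf.intervalIntegrable_comp (hu n) a b).def'.1)
    (Eventually.of_forall fun n => ae_of_all _ fun t ht => hM t (uIoc_subset_uIcc ht) _)
    intervalIntegrable_const (ae_of_all _ fun t _ => ?_)
  exact (hf.continuous.tendsto (t, v t)).comp (tendsto_const_nhds.prodMk_nhds (hlim t))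

theorem hasDerivAt_of_eq_integral {u : ℝ → ℝ} (hu : Measurable u) {x₀ : ℝ}
    (h : ∀ y, u y = u x₀ + ∫ t in x₀..y, f t (u t)) (x : ℝ) :
    HasDerivAt u (f x (u x)) x := by
  have hu_cont : Continuous u := by
    rw [funext h]
    exact continuous_const.add
      (intervalIntegral.continuous_primitive (hf.intervalIntegrable_comp hu) x₀)
  have hg : Continuous fun t => f t (u t) := hf.continuous.comp₂ continuous_id hu_cont
  exact ((hg.integral_hasStrictDerivAt x₀ x).hasDerivAt.const_add (u x₀)).congr_of_eventuallyEq
    (Eventually.of_forall h)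

theorem tendsto_picard (c x : ℝ) :
    Tendsto (fun k => picard f c k x) atTop (𝓝 (odeSol f c x)) := by
  obtain ⟨M, hM⟩ := hf.bounded _ (isCompact_uIcc (a := 0) (b := x))
  obtain ⟨L, hL⟩ := hf.lipschitz _ (isCompact_uIcc (a := 0) (b := x))
  have hM0 : 0 ≤ M := (abs_nonneg _).trans (hM 0 left_mem_uIcc c)
  have hsum : Summable fun k => M * |x| * ((L * |x|) ^ k / k.factorial) :=
    (Real.summable_pow_div_factorial _).mul_left _
  refine tendsto_nhds_limUnder (cauchySeq_tendsto_of_complete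
    (cauchySeq_of_dist_le_of_summable (fun k => M * L ^ k * |x| ^ (k + 1) / (k + 1).factorial)
      (fun k => ?_) (hsum.of_nonneg_of_le (fun k => ?_) (fun k => ?_))))
  · rw [Real.dist_eq, abs_sub_comm]
    exact abs_picard_succ_sub_le hf.continuous c hM hL k x right_mem_uIcc
  · positivity
  · calc M * L ^ k * |x| ^ (k + 1) / ((k + 1).factorial : ℝ)
        = M * |x| * ((L * |x|) ^ k / (k + 1).factorial) := by ring
      _ ≤ M * |x| * ((L * |x|) ^ k / k.factorial) := by
        gcongr
        exact k.le_succ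

theorem measurable_odeSol (c : ℝ) : Measurable (odeSol f c) :=
  measurable_of_tendsto_metrizable (fun k => (continuous_picard hf.continuous c k).measurable)
    (tendsto_pi_nhds.2 (hf.tendsto_picard c))

theorem odeSol_eq_integral (c x : ℝ) : odeSol f c x = c + ∫ t in (0:ℝ)..x, f t (odeSol f c t) :=
  tendsto_nhds_unique ((hf.tendsto_picard c x).comp (tendsto_add_atTop_nat 1))
    ((hf.tendsto_integral_comp (fun k => (continuous_picard hf.continuous c k).measurable)
      (hf.tendsto_picard c) 0 x).const_add c)

theorem odeSol_zero (c : ℝ) : odeSol f c 0 = c := by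
  simpa using hf.odeSol_eq_integral c 0

theorem hasDerivAt_odeSol (c x : ℝ) : HasDerivAt (odeSol f c) (f x (odeSol f c x)) x :=
  hf.hasDerivAt_of_eq_integral (hf.measurable_odeSol c) (x₀ := 0)
    (fun y => by rw [hf.odeSol_zero]; exact hf.odeSol_eq_integral c y) x

theorem le_of_hasDerivAt_of_le {u v : ℝ → ℝ} (hu : ∀ t, HasDerivAt u (f t (u t)) t)
    (hv : ∀ t, HasDerivAt v (f t (v t)) t) {s x : ℝ} (hs : u s ≤ v s) (hx : s ≤ x) :
    u x ≤ v x := by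
  -- If `v x < u x`, the solutions meet at some `t₀ ∈ [s, x]`, and uniqueness from `t₀` on
  -- forces `u x = v x`.
  by_contra! hlt
  have hcont : ∀ {w : ℝ → ℝ} (K : Set ℝ), (∀ t, HasDerivAt w (f t (w t)) t) → ContinuousOn w K :=
    fun K hw t _ => (hw t).continuousAt.continuousWithinAt
  obtain ⟨t₀, ht₀, heq⟩ := intermediate_value_Icc hx ((hcont _ hu).sub (hcont _ hv))
    (⟨by linarith, by linarith⟩ : (0 : ℝ) ∈ Icc (u s - v s) (u x - v x))
  obtain ⟨L, hL⟩ := hf.lipschitz _ (isCompact_Icc (a := t₀) (b := x))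
  have := ODE_solution_unique_of_mem_Icc_right (v := f) (s := fun _ => univ)
    (fun t ht => (hL t (Ico_subset_Icc_self ht)).lipschitzOnWith) (hcont _ hu)
    (fun t _ => (hu t).hasDerivWithinAt) (fun _ _ => mem_univ _) (hcont _ hv)
    (fun t _ => (hv t).hasDerivWithinAt) (fun _ _ => mem_univ _) (sub_eq_zero.1 heq)
    ⟨ht₀.2, le_rfl⟩
  exact hlt.ne' this

theorem hasDerivAt_odeSolFrom (c s x : ℝ) :
    HasDerivAt (odeSolFrom f c s) (f x (odeSolFrom f c s x)) x := by
  have := ((hf.comp_add_right s).hasDerivAt_odeSol c (x - s)).comp x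
    ((hasDerivAt_id x).sub_const s)
  rw [sub_add_cancel, mul_one] at this
  exact this

theorem continuous_odeSolFrom (c s : ℝ) : Continuous (odeSolFrom f c s) :=
  continuous_iff_continuousAt.2 fun x => (hf.hasDerivAt_odeSolFrom c s x).continuousAt

theorem odeSolFrom_self (c s : ℝ) : odeSolFrom f c s s = c := by
  simpa [odeSolFrom] using (hf.comp_add_right s).odeSol_zero c

end IsBoundedLipschitzField

structure IsTrappingField (f : ℝ → ℝ → ℝ) (c R : ℝ) : Prop
    extends IsBoundedLipschitzField f where
  le : c ≤ R
  pos_left : ∀ t, 0 < f t c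
  neg_right : ∀ t, f t R < 0

-- Exists for trapping fields: `s ↦ odeSolFrom f c s x` is antitone and bounded for `s ≤ x`.
noncomputable def pullbackSol (f : ℝ → ℝ → ℝ) (c x : ℝ) : ℝ :=
  limUnder atBot fun s => odeSolFrom f c s x

namespace IsTrappingField

variable {f : ℝ → ℝ → ℝ} {c R : ℝ} (hf : IsTrappingField f c R)
include hf

theorem odeSolFrom_mem_Icc {s x : ℝ} (hx : s ≤ x) : odeSolFrom f c s x ∈ Icc c R :=
  mem_Icc_of_hasDerivAt_of_boundary (hf.hasDerivAt_odeSolFrom c s) hf.pos_left hf.neg_right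
    (by rw [hf.odeSolFrom_self]; exact ⟨le_rfl, hf.le⟩) hx

theorem odeSolFrom_le_odeSolFrom {s s' x : ℝ} (hs : s ≤ s') (hx : s' ≤ x) :
    odeSolFrom f c s' x ≤ odeSolFrom f c s x :=
  hf.le_of_hasDerivAt_of_le (hf.hasDerivAt_odeSolFrom c s') (hf.hasDerivAt_odeSolFrom c s)
    (by rw [hf.odeSolFrom_self]; exact (hf.odeSolFrom_mem_Icc hs).1) hx

theorem tendsto_odeSolFrom_atBot (x : ℝ) :
    Tendsto (fun s => odeSolFrom f c s x) atBot (𝓝 (pullbackSol f c x)) := by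
  have hanti : Antitone fun s => odeSolFrom f c (min s x) x :=
    fun s₁ s₂ h => hf.odeSolFrom_le_odeSolFrom (min_le_min_right x h) (min_le_right _ _)
  have hbdd : BddAbove (range fun s => odeSolFrom f c (min s x) x) :=
    ⟨R, forall_mem_range.2 fun s => (hf.odeSolFrom_mem_Icc (min_le_right _ _)).2⟩
  refine tendsto_nhds_limUnder ⟨_, (tendsto_atBot_ciSup hanti hbdd).congr' ?_⟩
  filter_upwards [eventually_le_atBot x] with s hs
  rw [min_eq_left hs]

theorem pullbackSol_mem_Icc (x : ℝ) : pullbackSol f c x ∈ Icc c R :=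
  isClosed_Icc.mem_of_tendsto (hf.tendsto_odeSolFrom_atBot x)
    ((eventually_le_atBot x).mono fun _ hs => hf.odeSolFrom_mem_Icc hs)

theorem tendsto_odeSolFrom_neg_natCast (x : ℝ) :
    Tendsto (fun n : ℕ => odeSolFrom f c (-n) x) atTop (𝓝 (pullbackSol f c x)) :=
  (hf.tendsto_odeSolFrom_atBot x).comp (tendsto_neg_atTop_atBot.comp tendsto_natCast_atTop_atTop)

theorem measurable_pullbackSol : Measurable (pullbackSol f c) :=
  measurable_of_tendsto_metrizable (fun _ => (hf.continuous_odeSolFrom c _).measurable)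
    (tendsto_pi_nhds.2 hf.tendsto_odeSolFrom_neg_natCast)

theorem pullbackSol_eq_integral (x₀ y : ℝ) :
    pullbackSol f c y = pullbackSol f c x₀ + ∫ t in x₀..y, f t (pullbackSol f c t) := by
  have hsol : ∀ n : ℕ, odeSolFrom f c (-n) x₀ + ∫ t in x₀..y, f t (odeSolFrom f c (-n) t) =
      odeSolFrom f c (-n) y := fun n => by
    rw [intervalIntegral.integral_eq_sub_of_hasDerivAt
      (fun t _ => hf.hasDerivAt_odeSolFrom c _ t)
      (hf.intervalIntegrable_comp (hf.continuous_odeSolFrom c _).measurable x₀ y)]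
    ring
  have hint := hf.tendsto_integral_comp (fun _ => (hf.continuous_odeSolFrom c _).measurable)
    hf.tendsto_odeSolFrom_neg_natCast x₀ y
  exact tendsto_nhds_unique (hf.tendsto_odeSolFrom_neg_natCast y)
    (((hf.tendsto_odeSolFrom_neg_natCast x₀).add hint).congr hsol)

theorem hasDerivAt_pullbackSol (x : ℝ) :
    HasDerivAt (pullbackSol f c) (f x (pullbackSol f c x)) x :=
  hf.hasDerivAt_of_eq_integral hf.measurable_pullbackSol (hf.pullbackSol_eq_integral 0) x

theorem pullbackSol_comp_add_right (s x : ℝ) :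
    pullbackSol (fun t => f (t + s)) c x = pullbackSol f c (x + s) := by
  refine ((hf.tendsto_odeSolFrom_atBot (x + s)).comp
    (tendsto_atBot_add_const_right atBot s tendsto_id)).congr (fun s' => ?_) |>.limUnder_eq
  simp only [odeSolFrom, Function.comp_apply, id, add_assoc, add_sub_add_right_eq_sub]

end IsTrappingField

theorem measurable_intervalIntegral_of_uncurry_s7 {α : Type*} [MeasurableSpace α] {g : α → ℝ → ℝ}
    (hg : Measurable (Function.uncurry g)) (a b : ℝ) :
    Measurable fun x => ∫ t in a..b, g x t :=
  (hg.stronglyMeasurable.integral_prod_right' (ν := volume.restrict (Ioc a b))).measurable.sub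
    (hg.stronglyMeasurable.integral_prod_right' (ν := volume.restrict (Ioc b a))).measurable

section Stationary

variable {Ω : Type*} [MeasurableSpace Ω] {F : ℝ → ℝ → Ω → ℝ}

theorem measurable_picard_param (hF : Measurable fun q : ℝ × ℝ × Ω => F q.1 q.2.1 q.2.2)
    (hcont : ∀ ω, Continuous (Function.uncurry fun t p => F t p ω)) (c : ℝ) :
    ∀ k, Measurable fun q : ℝ × Ω => picard (fun t p => F t p q.2) c k q.1
  | 0 => measurable_const
  | k + 1 => measurable_uncurry_of_continuous_of_measurable
      (u := fun x ω => picard (fun t p => F t p ω) c (k + 1) x)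
      (fun ω => continuous_picard (hcont ω) c (k + 1))
      (fun x => measurable_const.add <| measurable_intervalIntegral_of_uncurry_s7
        (g := fun ω t => F t (picard (fun t p => F t p ω) c k t) ω)
        (hF.comp (measurable_snd.prodMk (((measurable_picard_param hF hcont c k).comp
          (measurable_snd.prodMk measurable_fst)).prodMk measurable_fst))) 0 x)

theorem measurable_odeSol_param (hF : Measurable fun q : ℝ × ℝ × Ω => F q.1 q.2.1 q.2.2)
    (hfield : ∀ ω, IsBoundedLipschitzField fun t p => F t p ω) (c : ℝ) :
    Measurable fun q : ℝ × Ω => odeSol (fun t p => F t p q.2) c q.1 :=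
  measurable_of_tendsto_metrizable (measurable_picard_param hF (fun ω => (hfield ω).continuous) c)
    (tendsto_pi_nhds.2 fun q => (hfield q.2).tendsto_picard c q.1)

theorem exists_stationary_solution {τ : ℝ → Ω → Ω} {c R : ℝ}
    (hτ : Measurable fun q : ℝ × Ω => τ q.1 q.2)
    (hF : Measurable fun q : ℝ × ℝ × Ω => F q.1 q.2.1 q.2.2)
    (hstat : ∀ t s p ω, F t p (τ s ω) = F (t + s) p ω)
    (htrap : ∀ ω, IsTrappingField (fun t p => F t p ω) c R) :
    ∃ f : ℝ → Ω → ℝ, Measurable (fun q : ℝ × Ω => f q.1 q.2) ∧ (∀ x ω, f x ω = f 0 (τ x ω)) ∧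
      (∀ x ω, f x ω ∈ Icc c R) ∧ ∀ ω x, HasDerivAt (fun y => f y ω) (F x (f x ω) ω) x := by
  have hshift : ∀ s ω, (fun t p => F t p (τ s ω)) = fun t => (fun t p => F t p ω) (t + s) :=
    fun s ω => funext fun t => funext fun p => hstat t s p ω
  refine ⟨fun x ω => pullbackSol (fun t p => F t p ω) c x, ?_, fun x ω => ?_,
    fun x ω => (htrap ω).pullbackSol_mem_Icc x, fun ω => (htrap ω).hasDerivAt_pullbackSol⟩
  -- `odeSolFrom` for `ω` started at time `-n` is `odeSol` for the environment `τ (-n) ω`.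
  · refine measurable_of_tendsto_metrizable
      (f := fun n (q : ℝ × Ω) => odeSolFrom (fun t p => F t p q.2) c (-n) q.1) (fun n => ?_)
      (tendsto_pi_nhds.2 fun q => (htrap q.2).tendsto_odeSolFrom_neg_natCast q.1)
    simp only [odeSolFrom, ← hshift]
    exact (measurable_odeSol_param hF (fun ω => (htrap ω).toIsBoundedLipschitzField) c).comp
      ((measurable_fst.sub measurable_const).prodMk
        (hτ.comp (measurable_const.prodMk measurable_snd)))
  · simp only [hshift, (htrap ω).pullbackSol_comp_add_right, zero_add]

end Stationary

theorem continuous_of_abs_sub_le {g m : ℝ → ℝ} (hm : Tendsto m (𝓝[>] 0) (𝓝 0))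
    (hg : ∀ x y, |g y - g x| ≤ m |y - x|) : Continuous g := by
  refine continuous_iff_continuousAt.2 fun x => continuousWithinAt_compl_self.1 ?_
  have hdist : Tendsto (fun y => |y - x|) (𝓝[≠] x) (𝓝[>] 0) :=
    tendsto_nhdsWithin_iff.2 ⟨((continuous_id.sub continuous_const).abs.tendsto' x 0
      (by simp)).mono_left nhdsWithin_le_nhds,
      eventually_nhdsWithin_of_forall fun y hy => abs_pos.2 (sub_ne_zero.2 hy)⟩
  exact tendsto_iff_norm_sub_tendsto_zero.2
    (squeeze_zero (fun _ => norm_nonneg _) (fun y => hg x y) (hm.comp hdist))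

theorem abs_max_min_le {c R : ℝ} (hcR : |c| ≤ R) (p : ℝ) : |max c (min p R)| ≤ R :=
  abs_le.2 ⟨(neg_le_of_abs_le hcR).trans (le_max_left _ _),
    max_le (le_of_abs_le hcR) (min_le_right _ _)⟩

-- The field of `a f' + H(f) = lam`, with the state clamped to `[c, R]` so that it becomes bounded
-- and globally Lipschitz in the state.
noncomputable def clampedField {Ω : Type} (a : ℝ → Ω → ℝ) (H : ℝ → ℝ → Ω → ℝ) (lam c R : ℝ)
    (t p : ℝ) (ω : Ω) : ℝ :=
  (lam - H (max c (min p R)) t ω) / a t ω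

namespace HJSetting

variable {Ω : Type} [MeasurableSpace Ω] {P : Measure Ω} {τ : ℝ → Ω → Ω} {a : ℝ → Ω → ℝ}
  {H : ℝ → ℝ → Ω → ℝ} {G_L G_U : ℝ → ℝ}

theorem reflect (hset : HJSetting P τ a H G_L G_U) :
    HJSetting P (fun x ω => τ (-x) ω) (fun x ω => a (-x) ω) (fun p x ω => H (-p) (-x) ω)
      G_L G_U where
  prob := hset.prob
  meas_tau := hset.meas_tau.comp (measurable_fst.neg.prodMk measurable_snd)
  mp_tau x := hset.mp_tau (-x)
  tau_zero ω := by simpa using hset.tau_zero ω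
  tau_add x y ω := by rw [neg_add]; exact hset.tau_add (-x) (-y) ω
  ergodic A hA hinv := hset.ergodic A hA fun x => by simpa using hinv (-x)
  meas_a := hset.meas_a.comp (measurable_fst.neg.prodMk measurable_snd)
  a_pos x ω := hset.a_pos (-x) ω
  a_le_one x ω := hset.a_le_one (-x) ω
  a_stat x ω := by simpa using hset.a_stat (-x) ω
  a_sqrt_lip := by
    obtain ⟨κ, hκ, hlip⟩ := hset.a_sqrt_lip
    exact ⟨κ, hκ, fun x ω => by simpa using hlip (-x) ω⟩
  meas_H := hset.meas_H.comp
    (measurable_fst.neg.prodMk (measurable_snd.fst.neg.prodMk measurable_snd.snd))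
  H_stat p x ω := by simpa using hset.H_stat (-p) (-x) ω
  GL_cont := hset.GL_cont
  GU_cont := hset.GU_cont
  GL_even := hset.GL_even
  GU_even := hset.GU_even
  GL_mono := hset.GL_mono
  GU_mono := hset.GU_mono
  GL_coercive := hset.GL_coercive
  GU_coercive := hset.GU_coercive
  H_lower p ω := by simpa [hset.GL_even] using hset.H_lower (-p) ω
  H_upper p ω := by simpa [hset.GU_even] using hset.H_upper (-p) ω
  H_lip R hR := by
    obtain ⟨K, hK, hlip⟩ := hset.H_lip R hR
    refine ⟨K, hK, fun p q ω hp hq => ?_⟩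
    simpa only [neg_zero, neg_sub_neg, abs_sub_comm q p] using
      hlip (-p) (-q) ω (by rwa [abs_neg]) (by rwa [abs_neg])
  H_mod R hR := by
    obtain ⟨m, hm0, hmono, hm, hmod⟩ := hset.H_mod R hR
    exact ⟨m, hm0, hmono, hm, fun p x ω hp => by
      simpa using hmod (-p) (-x) ω (by rwa [abs_neg])⟩

variable (hset : HJSetting P τ a H G_L G_U)
include hset

theorem a_shift (t s : ℝ) (ω : Ω) : a t (τ s ω) = a (t + s) ω := by
  rw [hset.a_stat, hset.a_stat (t + s), hset.tau_add]

theorem H_shift (p t s : ℝ) (ω : Ω) : H p t (τ s ω) = H p (t + s) ω := by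
  rw [hset.H_stat, hset.H_stat p (t + s), hset.tau_add]

theorem continuous_a_s7 (ω : Ω) : Continuous fun t => a t ω := by
  obtain ⟨κ, hκ, hlip⟩ := hset.a_sqrt_lip
  have hsqrt : LipschitzWith κ.toNNReal fun t => √(a t ω) :=
    LipschitzWith.of_dist_le_mul fun t t' => by
      rw [Real.dist_eq, Real.dist_eq, Real.coe_toNNReal _ hκ.le]
      simpa only [hset.a_shift, sub_add_cancel, zero_add] using hlip (t - t') (τ t' ω)
  exact (hsqrt.continuous.pow 2).congr fun t => Real.sq_sqrt (hset.a_pos t ω).le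

theorem continuous_H_s7 (p : ℝ) (ω : Ω) : Continuous fun t => H p t ω := by
  obtain ⟨m, -, -, hm, hmod⟩ := hset.H_mod (|p| + 1) (by positivity)
  refine continuous_of_abs_sub_le hm fun t t' => ?_
  simpa only [hset.H_shift, sub_add_cancel, zero_add] using
    hmod p (t' - t) (τ t ω) (le_add_of_nonneg_right zero_le_one)

theorem exists_lipschitzWith_H_clamp {c R : ℝ} (hR : 0 < R) (hcR : |c| ≤ R) :
    ∃ K : ℝ≥0, ∀ t ω, LipschitzWith K fun p => H (max c (min p R)) t ω := by
  obtain ⟨K, hK, hlip⟩ := hset.H_lip R hR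
  refine ⟨K.toNNReal, fun t ω => LipschitzWith.of_dist_le_mul fun p q => ?_⟩
  rw [Real.coe_toNNReal _ hK.le, Real.dist_eq, hset.H_stat, hset.H_stat (max c (min q R))]
  calc _ ≤ K * dist (max c (min p R)) (max c (min q R)) :=
        hlip _ _ _ (abs_max_min_le hcR p) (abs_max_min_le hcR q)
    _ ≤ K * dist p q := by
      simpa using mul_le_mul_of_nonneg_left
        (((LipschitzWith.id.min_const R).const_max c).dist_le_mul p q) hK.le

theorem exists_bound_H (R : ℝ) : ∃ B, ∀ p t ω, |p| ≤ R → |H p t ω| ≤ B := by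
  obtain ⟨BL, hBL⟩ := (isCompact_Icc (a := -R) (b := R)).exists_bound_of_continuousOn
    hset.GL_cont.continuousOn
  obtain ⟨BU, hBU⟩ := (isCompact_Icc (a := -R) (b := R)).exists_bound_of_continuousOn
    hset.GU_cont.continuousOn
  refine ⟨max BL BU, fun p t ω hp => ?_⟩
  have hL := abs_le.1 (hBL p (abs_le.1 hp))
  have hU := abs_le.1 (hBU p (abs_le.1 hp))
  have := hset.H_lower p (τ t ω)
  have := hset.H_upper p (τ t ω)
  rw [hset.H_stat]
  exact abs_le.2 ⟨by linarith [le_max_left BL BU], by linarith [le_max_right BL BU]⟩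

theorem isTrappingField_clampedField {lam c R : ℝ} (hR : 0 < R) (hcR : |c| ≤ R)
    (hc : G_U c < lam) (hRlam : lam < G_L R) (ω : Ω) :
    IsTrappingField (fun t p => clampedField a H lam c R t p ω) c R := by
  unfold clampedField
  obtain ⟨K, hK⟩ := hset.exists_lipschitzWith_H_clamp hR hcR
  obtain ⟨B, hB⟩ := hset.exists_bound_H R
  have hHcont : Continuous fun q : ℝ × ℝ => H (max c (min q.2 R)) q.1 ω :=
    continuous_prod_of_continuous_lipschitzWith' _ K (fun t => hK t ω)
      fun p => hset.continuous_H_s7 (max c (min p R)) ω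
  have hainv : Continuous fun t => (a t ω)⁻¹ :=
    (hset.continuous_a_s7 ω).inv₀ fun t => (hset.a_pos t ω).ne'
  refine ⟨⟨?_, fun T hT => ?_, fun T hT => ?_⟩, le_of_abs_le hcR, fun t => ?_, fun t => ?_⟩
  · exact (continuous_const.sub hHcont).div ((hset.continuous_a_s7 ω).comp continuous_fst)
      fun q => (hset.a_pos q.1 ω).ne'
  · obtain ⟨A, hA⟩ := hT.exists_bound_of_continuousOn hainv.continuousOn
    refine ⟨(|lam| + B) * A, fun t ht p => ?_⟩
    have hHB := hB _ t ω (abs_max_min_le hcR p)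
    rw [div_eq_mul_inv, abs_mul]
    exact mul_le_mul ((abs_sub _ _).trans (add_le_add le_rfl hHB)) (hA t ht) (abs_nonneg _)
      (add_nonneg (abs_nonneg _) ((abs_nonneg _).trans hHB))
  · obtain ⟨A, hA⟩ := hT.exists_bound_of_continuousOn hainv.continuousOn
    refine ⟨K * A.toNNReal, fun t ht => LipschitzWith.of_dist_le_mul fun p q => ?_⟩
    rw [Real.dist_eq, ← sub_div, sub_sub_sub_cancel_left, abs_div, abs_of_pos (hset.a_pos t ω),
      div_eq_mul_inv, NNReal.coe_mul, Real.coe_toNNReal _ ((abs_nonneg _).trans (hA t ht)),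
      ← Real.dist_eq, dist_comm]
    calc dist (H (max c (min p R)) t ω) (H (max c (min q R)) t ω) * (a t ω)⁻¹
        ≤ K * dist p q * A := mul_le_mul ((hK t ω).dist_le_mul p q)
          ((le_abs_self _).trans (hA t ht)) (inv_nonneg.2 (hset.a_pos t ω).le) (by positivity)
      _ = K * A * dist p q := by ring
  · refine div_pos (sub_pos.2 (lt_of_le_of_lt ?_ hc)) (hset.a_pos t ω)
    rw [min_eq_left (le_of_abs_le hcR), max_self, hset.H_stat]
    exact hset.H_upper c _
  · refine div_neg_of_neg_of_pos (sub_neg.2 (hRlam.trans_le ?_)) (hset.a_pos t ω)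
    rw [min_self, max_eq_right (le_of_abs_le hcR), hset.H_stat]
    exact hset.H_lower R _

theorem measurable_clampedField (lam c R : ℝ) :
    Measurable fun q : ℝ × ℝ × Ω => clampedField a H lam c R q.1 q.2.1 q.2.2 :=
  (measurable_const.sub (hset.meas_H.comp
    (((measurable_const.max (measurable_id.min measurable_const)).comp measurable_snd.fst).prodMk
      (measurable_fst.prodMk measurable_snd.snd)))).div
    (hset.meas_a.comp (measurable_fst.prodMk measurable_snd.snd))

theorem clampedField_shift (lam c R t s p : ℝ) (ω : Ω) :
    clampedField a H lam c R t p (τ s ω) = clampedField a H lam c R (t + s) p ω := by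
  simp only [clampedField, hset.H_shift, hset.a_shift]

theorem exists_statSol_Icc (c : ℝ) : ∃ lam R f, StatSol P τ a H lam f ∧ ∀ x ω, f x ω ∈ Icc c R := by
  obtain ⟨R, hRlam, hR⟩ := ((hset.GL_coercive.eventually_gt_atTop (G_U c + 1)).and
    (eventually_ge_atTop (|c| + 1))).exists
  have hcR : |c| ≤ R := by linarith
  have htrap := hset.isTrappingField_clampedField (by linarith [abs_nonneg c]) hcR
    (lt_add_one _) hRlam
  obtain ⟨f, hmeas, hstat, hmem, hderiv⟩ := exists_stationary_solution hset.meas_tau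
    (hset.measurable_clampedField _ c R) (hset.clampedField_shift _ c R) htrap
  refine ⟨G_U c + 1, R, f, ⟨hmeas, hstat, fun ω => ?_, ae_of_all _ fun ω => ⟨⟨R, fun x => ?_⟩,
    fun x => ?_⟩⟩, hmem⟩
  · rw [contDiff_one_iff_deriv, funext fun x => (hderiv ω x).deriv]
    exact ⟨fun x => (hderiv ω x).differentiableAt, (htrap ω).continuous.comp₂ continuous_id
      (continuous_iff_continuousAt.2 fun x => (hderiv ω x).continuousAt)⟩
  · exact abs_le.2 ⟨(neg_le_of_abs_le hcR).trans (hmem x ω).1, (hmem x ω).2⟩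
  · rw [(hderiv ω x).deriv, clampedField, min_eq_left (hmem x ω).2, max_eq_right (hmem x ω).1,
      mul_div_cancel₀ _ (hset.a_pos x ω).ne', sub_add_cancel]

theorem exists_mem_Eset_gt (c : ℝ) : ∃ θ ∈ Eset P τ a H, c < θ := by
  obtain ⟨lam, R, f, hf, hmem⟩ := hset.exists_statSol_Icc (c + 1)
  have := hset.prob
  have hint : Integrable (f 0) P :=
    .of_bound (hf.1.comp (measurable_const.prodMk measurable_id)).aestronglyMeasurable _
      (ae_of_all _ fun ω => abs_le_max_abs_abs (hmem 0 ω).1 (hmem 0 ω).2)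
  refine ⟨_, ⟨lam, f, hf, rfl⟩, ?_⟩
  calc c < ∫ _, (c + 1) ∂P := by simp
    _ ≤ ∫ ω, f 0 ω ∂P := integral_mono (integrable_const _) hint fun ω => (hmem 0 ω).1

end HJSetting

theorem neg_mem_Eset_of_mem_reflect {Ω : Type} [MeasurableSpace Ω] {P : Measure Ω}
    {τ : ℝ → Ω → Ω} {a : ℝ → Ω → ℝ} {H : ℝ → ℝ → Ω → ℝ} {θ : ℝ}
    (hθ : θ ∈ Eset P (fun x ω => τ (-x) ω) (fun x ω => a (-x) ω)
      (fun p x ω => H (-p) (-x) ω)) :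
    -θ ∈ Eset P τ a H := by
  obtain ⟨lam, f, ⟨hmeas, hstat, hC1, hae⟩, rfl⟩ := hθ
  have hderiv : ∀ ω x, HasDerivAt (fun y => -f (-y) ω) (deriv (fun y => f y ω) (-x)) x :=
    fun ω x => by
      have := (((hC1 ω).differentiable one_ne_zero (-x)).hasDerivAt.comp x (hasDerivAt_neg x)).neg
      rw [mul_neg_one, neg_neg] at this
      exact this
  refine ⟨lam, fun x ω => -f (-x) ω, ⟨?_, fun x ω => ?_, fun ω => ?_, ?_⟩, ?_⟩
  · exact (hmeas.comp (measurable_fst.neg.prodMk measurable_snd)).neg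
  · simpa using hstat (-x) ω
  · exact ((hC1 ω).comp contDiff_neg).neg
  · filter_upwards [hae] with ω ⟨⟨M, hM⟩, hode⟩
    refine ⟨⟨M, fun x => by simpa using hM (-x)⟩, fun x => ?_⟩
    rw [(hderiv ω x).deriv]
    simpa using hode (-x)
  · simp [integral_neg]

theorem Eset_nonempty_and_unbounded
    {Ω : Type} [MeasurableSpace Ω] (P : Measure Ω) (τ : ℝ → Ω → Ω)
    (a : ℝ → Ω → ℝ) (H : ℝ → ℝ → Ω → ℝ) (G_L G_U : ℝ → ℝ)
    (hset : HJSetting P τ a H G_L G_U)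
 :
    (Eset P τ a H).Nonempty ∧ ¬ BddBelow (Eset P τ a H) ∧ ¬ BddAbove (Eset P τ a H) := by
  have hlt : ∀ c, ∃ θ ∈ Eset P τ a H, θ < c := fun c => by
    obtain ⟨θ, hθ, hcθ⟩ := hset.reflect.exists_mem_Eset_gt (-c)
    exact ⟨-θ, neg_mem_Eset_of_mem_reflect hθ, by linarith⟩
  obtain ⟨θ, hθ, -⟩ := hlt 0
  exact ⟨⟨θ, hθ⟩, not_bddBelow_iff.2 hlt, not_bddAbove_iff.2 hset.exists_mem_Eset_gt⟩
end

section
/- Let θ ∈ ℝ, λ ∈ ℝ and f ∈ S_st^λ with 𝔼[f(0,·)] = θ. Then ℙ( G_L(f(x,ω)) ≤ λ ≤ G_U(f(x,ω)) for all x ∈ ℝ ) = 1, and consequently G_L(θ) ≤ λ ≤ G_U(θ). -/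
open MeasureTheory Filter Set

/-!
Along almost every path the equation gives `f' ≤ λ - G_L(f)` wherever `G_L(f) > λ` and
`f' ≥ λ - G_U(f)` wherever `G_U(f) < λ`, because `0 < a ≤ 1`. Where `G_L(f) > λ`, the path is
pushed linearly away from `0` (forwards or backwards in `x`), contradicting boundedness. Where
`G_U(f) < λ`, which by ergodicity happens on almost every path as soon as on a non-null set, the
path is driven above a fixed level `ℓ > 0` as `x → ∞` and below `-ℓ` as `x → -∞`; by stationarity
`f(0)` is then almost surely both `≥ ℓ` and `≤ -ℓ`.

For the mean `θ`: the sublevel set `{G_L ≤ λ}` of the even, radially nondecreasing `G_L` is a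
closed interval, so it contains `θ`. If `G_U(θ) < λ`, the paths avoid a neighbourhood `[-ℓ, ℓ]`
of `θ`, so by continuity each stays on one side of it, by ergodicity almost all on the same side,
and then so does `θ`.
-/

def AbsMonotone (G : ℝ → ℝ) : Prop :=
  ∀ ⦃p q : ℝ⦄, |p| ≤ |q| → G p ≤ G q

namespace AbsMonotone

variable {G : ℝ → ℝ}

lemma of_even_of_monotoneOn (heven : ∀ p, G (-p) = G p) (hmono : MonotoneOn G (Ici 0)) :
    AbsMonotone G := by
  have habs : ∀ p, G |p| = G p := fun p => by
    rcases abs_choice p with h | h <;> rw [h]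
    exact heven p
  intro p q hpq
  rw [← habs p, ← habs q]
  exact hmono (abs_nonneg p) (abs_nonneg q) hpq

lemma apply_abs (hG : AbsMonotone G) (p : ℝ) : G |p| = G p :=
  le_antisymm (hG (abs_abs p).le) (hG (abs_abs p).ge)

lemma apply_neg (hG : AbsMonotone G) (p : ℝ) : G (-p) = G p :=
  le_antisymm (hG (abs_neg p).le) (hG (abs_neg p).ge)

lemma convex_setOf_le (hG : AbsMonotone G) (lam : ℝ) : Convex ℝ {p | G p ≤ lam} := by
  refine convex_iff_ordConnected.2 ⟨fun p hp q hq r hr => ?_⟩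
  have hr' := abs_le_max_abs_abs hr.1 hr.2
  rcases max_choice |p| |q| with h | h <;> rw [h] at hr'
  exacts [(hG hr').trans hp, (hG hr').trans hq]

lemma exists_abs_le_of_le (hG : AbsMonotone G) (hcoer : Tendsto G atTop atTop) (lam : ℝ) :
    ∃ R, ∀ p, G p ≤ lam → |p| ≤ R := by
  obtain ⟨R, hR⟩ := (hcoer.eventually_gt_atTop lam).exists_forall_of_atTop
  refine ⟨R, fun p hp => le_of_not_gt fun hpR => ?_⟩
  have := hR |p| hpR.le
  rw [hG.apply_abs] at this
  linarith

lemma exists_gt_abs_lt (hG : AbsMonotone G) (hcont : Continuous G) {p lam : ℝ}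
    (hp : G p < lam) : ∃ ℓ, |p| < ℓ ∧ G ℓ < lam :=
  ((hcont.tendsto |p|).eventually (gt_mem_nhds (by rwa [hG.apply_abs]))).exists_gt

end AbsMonotone

lemma deriv_neg_comp_neg {𝕜 F : Type*} [NontriviallyNormedField 𝕜] [NormedAddCommGroup F]
    [NormedSpace 𝕜 F] (g : 𝕜 → F) (x : 𝕜) : deriv (fun x => -g (-x)) x = deriv g (-x) := by
  rw [show (fun x => -g (-x)) = -fun x => g (-x) from rfl, deriv.neg, deriv_comp_neg, neg_neg]

section Barriers

variable {g : ℝ → ℝ}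

lemma AbsMonotone.apply_le_of_deriv_le_of_nonpos {G : ℝ → ℝ} (hG : AbsMonotone G)
    (hg : Differentiable ℝ g) {M lam : ℝ} (hbdd : ∀ x, |g x| ≤ M)
    (hder : ∀ x, lam < G (g x) → deriv g x ≤ lam - G (g x)) {x₀ : ℝ} (h₀ : g x₀ ≤ 0) :
    G (g x₀) ≤ lam := by
  by_contra! hlt
  set δ := G (g x₀) - lam
  have hδ : 0 < δ := sub_pos.2 hlt
  -- `g` stays below the line of slope `-δ / 2` through `(x₀, g x₀)`, contradicting boundedness
  set x₁ := x₀ + 2 * (2 * M + 1) / δ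
  have hx₁ : x₀ ≤ x₁ :=
    le_add_of_nonneg_right (by have := (abs_nonneg _).trans (hbdd 0); positivity)
  have hline : g x₁ ≤ g x₀ - δ / 2 * (x₁ - x₀) := by
    refine image_le_of_deriv_right_lt_deriv_boundary (B := fun x => g x₀ - δ / 2 * (x - x₀))
      hg.continuous.continuousOn (fun x _ => (hg x).hasDerivAt.hasDerivWithinAt) (by simp)
      (fun x => by
        simpa using ((hasDerivAt_id x).sub_const x₀).const_mul (δ / 2) |>.const_sub _)
      (fun x hx hgx => ?_) ⟨hx₁, le_rfl⟩
    have hle : g x ≤ g x₀ := by rw [hgx]; nlinarith [hx.1]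
    have hGx : G (g x₀) ≤ G (g x) :=
      hG (by rw [abs_of_nonpos h₀, abs_of_nonpos (hle.trans h₀)]; linarith)
    linarith [hder x (by linarith)]
  have hx₁δ : δ / 2 * (x₁ - x₀) = 2 * M + 1 := by simp only [x₁]; field_simp; ring
  linarith [abs_le.1 (hbdd x₀), abs_le.1 (hbdd x₁)]

lemma AbsMonotone.apply_le_of_deriv_le {G : ℝ → ℝ} (hG : AbsMonotone G)
    (hg : Differentiable ℝ g) {M lam : ℝ} (hbdd : ∀ x, |g x| ≤ M)
    (hder : ∀ x, lam < G (g x) → deriv g x ≤ lam - G (g x)) (x : ℝ) : G (g x) ≤ lam := by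
  rcases le_or_gt (g x) 0 with hx | hx
  · exact hG.apply_le_of_deriv_le_of_nonpos hg hbdd hder hx
  -- the hypotheses are invariant under the reflection `g ↦ -g (-·)`, which flips the sign of `g x`
  have hrefl := hG.apply_le_of_deriv_le_of_nonpos (g := fun x => -g (-x))
    (hg.comp differentiable_neg).neg (M := M)
    (fun x => by simpa only [abs_neg] using hbdd (-x))
    (fun x hx => by
      simpa only [deriv_neg_comp_neg, hG.apply_neg] using
        hder (-x) (by simpa only [hG.apply_neg] using hx))
    (x₀ := -x) (by simpa using hx.le)
  simpa only [neg_neg, hG.apply_neg] using hrefl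

lemma eventually_ge_of_deriv_ge_on_band (hg : Differentiable ℝ g) {c δ y : ℝ} (hδ : 0 < δ)
    (hy : |g y| ≤ c) (hband : ∀ x, |g x| ≤ c → δ ≤ deriv g x) : ∀ᶠ x in atTop, c ≤ g x := by
  have hc : 0 ≤ c := (abs_nonneg _).trans hy
  obtain ⟨hyc₁, hyc₂⟩ := abs_le.1 hy
  -- `g` stays above the line of slope `δ / 2` through `(y, g y)` until that line reaches `c`
  set T := y + 2 * (c - g y) / δ
  have hyT : y ≤ T := le_add_of_nonneg_right (div_nonneg (by linarith) hδ.le)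
  have hslope : δ / 2 * (T - y) = c - g y := by simp only [T]; field_simp; ring
  have hcT : c ≤ g T := by
    have hbelow := image_le_of_deriv_right_lt_deriv_boundary
      (f := fun x => g y + δ / 2 * (x - y)) (f' := fun _ => δ / 2) (by fun_prop)
      (fun x _ => ?_) (by simp) (fun x => (hg x).hasDerivAt) (fun x hx hgx => ?_) ⟨hyT, le_rfl⟩
    · linarith
    · simpa using (((hasDerivAt_id x).sub_const y).const_mul (δ / 2)).const_add (g y)
        |>.hasDerivWithinAt
    · have hxT : δ / 2 * (x - y) ≤ δ / 2 * (T - y) := by gcongr; exact hx.2.le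
      have hgx' : |g x| ≤ c := abs_le.2 ⟨by nlinarith [hx.1], by linarith⟩
      linarith [hband x hgx']
  -- from then on, the constant `c` is a lower barrier
  refine eventually_atTop.2 ⟨T, fun x hx => ?_⟩
  refine image_le_of_deriv_right_lt_deriv_boundary (f := fun _ => c) (f' := 0)
    continuousOn_const (fun x _ => hasDerivWithinAt_const _ _ _) hcT (fun x => (hg x).hasDerivAt)
    (fun x _ hgx => hδ.trans_le (hband x ?_)) ⟨hx, le_rfl⟩
  rw [← hgx, abs_of_nonneg hc]

lemma eventually_le_neg_of_deriv_ge_on_band (hg : Differentiable ℝ g) {c δ y : ℝ} (hδ : 0 < δ)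
    (hy : |g y| ≤ c) (hband : ∀ x, |g x| ≤ c → δ ≤ deriv g x) : ∀ᶠ x in atBot, g x ≤ -c := by
  have hrefl := eventually_ge_of_deriv_ge_on_band (g := fun x => -g (-x))
    (hg.comp differentiable_neg).neg hδ (y := -y) (by simpa using hy)
    (fun x hx => by rw [deriv_neg_comp_neg]; exact hband _ (by simpa using hx))
  filter_upwards [tendsto_neg_atBot_atTop.eventually hrefl] with x hx
  simp only [neg_neg] at hx
  linarith

lemma AbsMonotone.eventually_ge_and_eventually_le_neg {G : ℝ → ℝ} (hG : AbsMonotone G)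
    (hg : Differentiable ℝ g) {lam ℓ y : ℝ}
    (hder : ∀ x, G (g x) < lam → lam - G (g x) ≤ deriv g x) (hy : G (g y) < lam)
    (hℓ : G ℓ < lam) : (∀ᶠ x in atTop, ℓ ≤ g x) ∧ ∀ᶠ x in atBot, g x ≤ -ℓ := by
  let c := max |g y| ℓ
  have hGc : G c < lam := by
    rcases max_choice |g y| ℓ with h | h <;> simp only [c, h]
    exacts [(hG.apply_abs _).symm ▸ hy, hℓ]
  have hband : ∀ x, |g x| ≤ c → lam - G c ≤ deriv g x := fun x hx => by
    have := hG (hx.trans (le_abs_self c))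
    linarith [hder x (by linarith)]
  have hy' : |g y| ≤ c := le_max_left _ _
  have hℓc : ℓ ≤ c := le_max_right _ _
  refine ⟨?_, ?_⟩
  · filter_upwards [eventually_ge_of_deriv_ge_on_band hg (sub_pos.2 hGc) hy' hband] with x hx
    linarith
  · filter_upwards [eventually_le_neg_of_deriv_ge_on_band hg (sub_pos.2 hGc) hy' hband] with x hx
    linarith

end Barriers

lemma Continuous.pos_of_forall_ne_zero {X : Type*} [TopologicalSpace X] [PreconnectedSpace X]
    {g : X → ℝ} (hg : Continuous g) (hne : ∀ x, g x ≠ 0) {y : X} (hy : 0 < g y) (x : X) :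
    0 < g x := by
  by_contra! hx
  obtain ⟨z, hz⟩ := intermediate_value_univ x y hg ⟨hx, hy.le⟩
  exact hne z hz

section Stationary

variable {Ω : Type} [MeasurableSpace Ω] {P : Measure Ω} [IsProbabilityMeasure P]

lemma ae_mem_of_ae_eventually_mem {T : ℝ → Ω → Ω} (hT : ∀ x, MeasurePreserving (T x) P P)
    {D : Set Ω} (hD : MeasurableSet D) (h : ∀ᵐ ω ∂P, ∀ᶠ x in atTop, T x ω ∈ D) :
    ∀ᵐ ω ∂P, ω ∈ D := by
  let C : ℕ → Set Ω := fun N => ⋂ n ≥ N, T n ⁻¹' D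
  have hC : Monotone C := fun N N' hNN' => biInter_subset_biInter_left fun n hn => hNN'.trans hn
  have hCmeas : MeasurableSet (⋃ N, C N) :=
    .iUnion fun N => .biInter (to_countable _) fun n _ => (hT n).measurable hD
  have hunion : P (⋃ N, C N) = 1 := by
    rw [← mem_ae_iff_prob_eq_one hCmeas]
    filter_upwards [h] with ω hω
    obtain ⟨N, hN⟩ := (tendsto_natCast_atTop_atTop.eventually hω).exists_forall_of_atTop
    exact mem_iUnion.2 ⟨N, mem_iInter₂.2 hN⟩
  refine (mem_ae_iff_prob_eq_one hD).2 (le_antisymm prob_le_one ?_)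
  refine hunion ▸ le_of_tendsto' (tendsto_measure_iUnion_atTop hC) fun N => ?_
  calc P (C N) ≤ P (T N ⁻¹' D) := measure_mono (biInter_subset_of_mem (le_refl N))
    _ = P D := (hT N).measure_preimage hD.nullMeasurableSet

lemma ae_forall_notMem_or_ae_exists_mem {τ : ℝ → Ω → Ω}
    (hτ : ∀ x y ω, τ (x + y) ω = τ x (τ y ω))
    (herg : ∀ A : Set Ω, MeasurableSet A → (∀ x, τ x ⁻¹' A = A) → P A = 0 ∨ P A = 1)
    {f : ℝ → Ω → ℝ} (hstat : ∀ x ω, f x ω = f 0 (τ x ω)) (hmeas : ∀ x, Measurable (f x))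
    (hcont : ∀ ω, Continuous fun x => f x ω) {U : Set ℝ} (hU : IsOpen U) :
    (∀ᵐ ω ∂P, ∀ y, f y ω ∉ U) ∨ ∀ᵐ ω ∂P, ∃ y, f y ω ∈ U := by
  let A := {ω | ∃ y, f y ω ∈ U}
  have hA : A = ⋃ q : ℚ, {ω | f q ω ∈ U} := by
    ext ω
    simp only [A, mem_ofPred_eq, mem_iUnion]
    exact ⟨fun hy => Rat.denseRange_cast.exists_mem_open (hU.preimage (hcont ω)) hy,
      fun ⟨q, hq⟩ => ⟨q, hq⟩⟩
  have hAmeas : MeasurableSet A := hA ▸ .iUnion fun q => hmeas q hU.measurableSet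
  have hAinv : ∀ x, τ x ⁻¹' A = A := by
    intro x
    ext ω
    have hshift : ∀ y, f y (τ x ω) = f (y + x) ω := fun y => by rw [hstat, ← hτ, ← hstat]
    simp only [A, mem_preimage, mem_ofPred_eq, hshift]
    exact ⟨fun ⟨y, hy⟩ => ⟨y + x, hy⟩, fun ⟨y, hy⟩ => ⟨y - x, by rwa [sub_add_cancel]⟩⟩
  rcases herg A hAmeas hAinv with h | h
  · left
    filter_upwards [measure_eq_zero_iff_ae_notMem.1 h] with ω hω y hy using hω ⟨y, hy⟩
  · exact .inr ((mem_ae_iff_prob_eq_one hAmeas).2 h)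

end Stationary

namespace HJSetting

variable {Ω : Type} [MeasurableSpace Ω] {P : Measure Ω} {τ : ℝ → Ω → Ω} {a : ℝ → Ω → ℝ}
  {H : ℝ → ℝ → Ω → ℝ} {G_L G_U : ℝ → ℝ}

lemma absMonotone_GL (hset : HJSetting P τ a H G_L G_U) : AbsMonotone G_L :=
  .of_even_of_monotoneOn hset.GL_even hset.GL_mono

lemma absMonotone_GU (hset : HJSetting P τ a H G_L G_U) : AbsMonotone G_U :=
  .of_even_of_monotoneOn hset.GU_even hset.GU_mono

lemma deriv_le_of_lt_GL (hset : HJSetting P τ a H G_L G_U) {lam p x d : ℝ} {ω : Ω}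
    (hode : a x ω * d + H p x ω = lam) (hp : lam < G_L p) : d ≤ lam - G_L p := by
  have hH : G_L p ≤ H p x ω := hset.H_stat p x ω ▸ hset.H_lower p (τ x ω)
  nlinarith [hset.a_pos x ω, hset.a_le_one x ω]

lemma sub_le_deriv_of_GU_lt (hset : HJSetting P τ a H G_L G_U) {lam p x d : ℝ} {ω : Ω}
    (hode : a x ω * d + H p x ω = lam) (hp : G_U p < lam) : lam - G_U p ≤ d := by
  have hH : H p x ω ≤ G_U p := hset.H_stat p x ω ▸ hset.H_upper p (τ x ω)
  nlinarith [hset.a_pos x ω, hset.a_le_one x ω]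

end HJSetting

namespace StatSol

variable {Ω : Type} [MeasurableSpace Ω] {P : Measure Ω} {τ : ℝ → Ω → Ω} {a : ℝ → Ω → ℝ}
  {H : ℝ → ℝ → Ω → ℝ} {G_L G_U : ℝ → ℝ} {lam : ℝ} {f : ℝ → Ω → ℝ}

lemma stationary (hf : StatSol P τ a H lam f) : ∀ x ω, f x ω = f 0 (τ x ω) :=
  hf.2.1

lemma ae_bounded_and_solves (hf : StatSol P τ a H lam f) :
    ∀ᵐ ω ∂P, (∃ M, ∀ x, |f x ω| ≤ M) ∧
      ∀ x, a x ω * deriv (fun y => f y ω) x + H (f x ω) x ω = lam :=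
  hf.2.2.2

lemma measurable_apply (hf : StatSol P τ a H lam f) (x : ℝ) : Measurable (f x) :=
  hf.1.comp measurable_prodMk_left

lemma differentiable (hf : StatSol P τ a H lam f) (ω : Ω) : Differentiable ℝ fun x => f x ω :=
  (hf.2.2.1 ω).differentiable one_ne_zero

lemma ae_forall_notMem_or_ae_exists_mem (hf : StatSol P τ a H lam f)
    (hset : HJSetting P τ a H G_L G_U) {U : Set ℝ} (hU : IsOpen U) :
    (∀ᵐ ω ∂P, ∀ y, f y ω ∉ U) ∨ ∀ᵐ ω ∂P, ∃ y, f y ω ∈ U :=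
  have := hset.prob
  _root_.ae_forall_notMem_or_ae_exists_mem hset.tau_add hset.ergodic hf.stationary
    hf.measurable_apply (fun ω => (hf.differentiable ω).continuous) hU

lemma ae_GL_le (hf : StatSol P τ a H lam f) (hset : HJSetting P τ a H G_L G_U) :
    ∀ᵐ ω ∂P, ∀ x, G_L (f x ω) ≤ lam := by
  filter_upwards [hf.ae_bounded_and_solves] with ω ⟨⟨M, hM⟩, hode⟩
  exact hset.absMonotone_GL.apply_le_of_deriv_le (hf.differentiable ω) hM
    fun x hx => hset.deriv_le_of_lt_GL (hode x) hx

lemma integrable (hf : StatSol P τ a H lam f) (hset : HJSetting P τ a H G_L G_U) :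
    Integrable (f 0) P := by
  have := hset.prob
  obtain ⟨R, hR⟩ := hset.absMonotone_GL.exists_abs_le_of_le hset.GL_coercive lam
  refine .of_bound (hf.measurable_apply 0).aestronglyMeasurable R ?_
  filter_upwards [hf.ae_GL_le hset] with ω hω using hR _ (hω 0)

lemma GL_integral_le (hf : StatSol P τ a H lam f) (hset : HJSetting P τ a H G_L G_U) :
    G_L (∫ ω, f 0 ω ∂P) ≤ lam :=
  have := hset.prob
  (hset.absMonotone_GL.convex_setOf_le lam).integral_mem
    (isClosed_le hset.GL_cont continuous_const) ((hf.ae_GL_le hset).mono fun _ hω => hω 0)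
    (hf.integrable hset)

lemma ae_le_GU (hf : StatSol P τ a H lam f) (hset : HJSetting P τ a H G_L G_U) :
    ∀ᵐ ω ∂P, ∀ x, lam ≤ G_U (f x ω) := by
  have := hset.prob
  have hGU := hset.absMonotone_GU
  rcases hf.ae_forall_notMem_or_ae_exists_mem hset
    (isOpen_lt hset.GU_cont continuous_const : IsOpen {p | G_U p < lam}) with h | h
  · filter_upwards [h] with ω hω x using not_lt.1 (hω x)
  obtain ⟨ω₀, y₀, hy₀⟩ := h.exists
  obtain ⟨ℓ, hℓ, hGℓ⟩ := hGU.exists_gt_abs_lt hset.GU_cont hy₀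
  have hpath : ∀ᵐ ω ∂P, (∀ᶠ x in atTop, ℓ ≤ f x ω) ∧ ∀ᶠ x in atBot, f x ω ≤ -ℓ := by
    filter_upwards [hf.ae_bounded_and_solves, h] with ω ⟨_, hode⟩ ⟨y, hy⟩
    exact hGU.eventually_ge_and_eventually_le_neg (hf.differentiable ω)
      (fun x hx => hset.sub_le_deriv_of_GU_lt (hode x) hx) hy hGℓ
  have hfwd : ∀ᵐ ω ∂P, ℓ ≤ f 0 ω := by
    refine ae_mem_of_ae_eventually_mem hset.mp_tau
      (measurableSet_le measurable_const (hf.measurable_apply 0)) ?_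
    filter_upwards [hpath] with ω hω
    filter_upwards [hω.1] with x hx using hx.trans_eq (hf.stationary x ω)
  have hbwd : ∀ᵐ ω ∂P, f 0 ω ≤ -ℓ := by
    refine ae_mem_of_ae_eventually_mem (fun x => hset.mp_tau (-x))
      (measurableSet_le (hf.measurable_apply 0) measurable_const) ?_
    filter_upwards [hpath] with ω hω
    filter_upwards [tendsto_neg_atTop_atBot.eventually hω.2] with x hx
    exact (hf.stationary (-x) ω).symm.trans_le hx
  obtain ⟨ω, h₁, h₂⟩ := (hfwd.and hbwd).exists
  linarith [abs_nonneg (f y₀ ω₀)]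

lemma le_GU_integral (hf : StatSol P τ a H lam f) (hset : HJSetting P τ a H G_L G_U) :
    lam ≤ G_U (∫ ω, f 0 ω ∂P) := by
  have := hset.prob
  have hGU := hset.absMonotone_GU
  set θ := ∫ ω, f 0 ω ∂P
  by_contra! hθ
  obtain ⟨ℓ, hℓ, hGℓ⟩ := hGU.exists_gt_abs_lt hset.GU_cont hθ
  have hfar : ∀ᵐ ω ∂P, ∀ x, ℓ < |f x ω| := by
    filter_upwards [hf.ae_le_GU hset] with ω hω x
    by_contra! hx
    linarith [hω x, hGU (hx.trans (le_abs_self ℓ))]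
  rcases hf.ae_forall_notMem_or_ae_exists_mem hset (isOpen_Ioi (a := 0)) with h | h
  · have hneg : ∀ᵐ ω ∂P, f 0 ω ∈ Iic (-ℓ) := by
      filter_upwards [h, hfar] with ω hω hωℓ
      have := hωℓ 0
      rw [abs_of_nonpos (not_lt.1 (hω 0))] at this
      exact mem_Iic.2 (by linarith)
    have := (convex_Iic _).integral_mem isClosed_Iic hneg (hf.integrable hset)
    linarith [neg_abs_le θ, mem_Iic.1 this]
  · have hpos : ∀ᵐ ω ∂P, f 0 ω ∈ Ici ℓ := by
      filter_upwards [h, hfar] with ω ⟨y, hy⟩ hωℓ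
      have hne : ∀ x, f x ω ≠ 0 := fun x hx => by
        linarith [hωℓ x, abs_nonneg θ, show |f x ω| = 0 by rw [hx, abs_zero]]
      have := hωℓ 0
      rw [abs_of_pos ((hf.differentiable ω).continuous.pos_of_forall_ne_zero hne hy 0)] at this
      exact mem_Ici.2 this.le
    have := (convex_Ici _).integral_mem isClosed_Ici hpos (hf.integrable hset)
    linarith [le_abs_self θ, mem_Ici.1 this]

end StatSol

theorem stationary_solution_level_bounds
    {Ω : Type} [MeasurableSpace Ω] (P : Measure Ω) (τ : ℝ → Ω → Ω)
    (a : ℝ → Ω → ℝ) (H : ℝ → ℝ → Ω → ℝ) (G_L G_U : ℝ → ℝ)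
    (hset : HJSetting P τ a H G_L G_U)
    (θ lam : ℝ) (f : ℝ → Ω → ℝ)
    (hf : StatSol P τ a H lam f) (hmean : (∫ ω, f 0 ω ∂P) = θ) :
    (∀ᵐ ω ∂P, ∀ x, G_L (f x ω) ≤ lam ∧ lam ≤ G_U (f x ω)) ∧
    G_L θ ≤ lam ∧ lam ≤ G_U θ := by
  refine ⟨?_, hmean ▸ hf.GL_integral_le hset, hmean ▸ hf.le_GU_integral hset⟩
  filter_upwards [hf.ae_GL_le hset, hf.ae_le_GU hset] with ω hL hU x using ⟨hL x, hU x⟩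
end
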